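/- arXiv:2307.03335 — 8 statements merged into one kernel-verified Lean document; each statement's English description precedes it below -/
import Mathlib

section
/- Let f : ℝⁿ → ℝ be differentiable with L-Lipschitz gradient (L ≥ 0). Let M be an n×d real matrix and G an n×s real matrix such that GᵀMMᵀG is positive definite, and set Z := I_d − MᵀG(GᵀMMᵀG)⁻¹GᵀM. Fix x ∈ ℝⁿ, a step size α ≥ 0 and ε > 0, and suppose ‖M Z Mᵀ∇f(x)‖² ≤ ((1+ε)/n)·‖Z Mᵀ∇f(x)‖². Then f(x − α·M Z Mᵀ∇f(x)) ≤ f(x) − (α − L·α²·(1+ε)/(2n))·‖Z Mᵀ∇f(x)‖². -/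
open Matrix InnerProductSpace

/-- Apply a real matrix to a vector of the corresponding Euclidean space. -/
noncomputable def mulVecE {m n : Type*} [Fintype n] (A : Matrix m n ℝ)
    (v : EuclideanSpace ℝ n) : EuclideanSpace ℝ m :=
  (WithLp.equiv 2 (m → ℝ)).symm (A.mulVec ((WithLp.equiv 2 (n → ℝ)) v))

/-- `Z = I - MᵀG(GᵀMMᵀG)⁻¹GᵀM`. -/
noncomputable def Zmat {n d s : Type*} [Fintype n] [Fintype d] [DecidableEq d] [Fintype s] [DecidableEq s]
    (M : Matrix n d ℝ) (G : Matrix n s ℝ) : Matrix d d ℝ :=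
  1 - Mᵀ * G * (Gᵀ * M * Mᵀ * G)⁻¹ * Gᵀ * M

/-- Descent lemma for functions with Lipschitz gradient. -/
lemma descent_lemma' {F : Type*} [NormedAddCommGroup F] [InnerProductSpace ℝ F] [CompleteSpace F]
    (f : F → ℝ) (L : ℝ) (hL : 0 ≤ L) (hdiff : Differentiable ℝ f)
    (hlip : ∀ x y, ‖gradient f x - gradient f y‖ ≤ L * ‖x - y‖) (x v : F) :
    f (x + v) ≤ f x + ⟪gradient f x, v⟫_ℝ + L / 2 * ‖v‖ ^ 2 := by
  have hgc : Continuous (gradient f) := by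
    have : LipschitzWith ⟨L, hL⟩ (gradient f) :=
      LipschitzWith.of_dist_le_mul (fun a b => by simp only [dist_eq_norm]; exact hlip a b)
    exact this.continuous
  have hcurve : ∀ t : ℝ, HasDerivAt (fun t : ℝ => f (x + t • v))
      ⟪gradient f (x + t • v), v⟫_ℝ t := by
    intro t
    have h1 : HasDerivAt (fun t : ℝ => x + t • v) v t := by
      simpa using ((hasDerivAt_id t).smul_const v).const_add x
    have h2 := (hdiff (x + t • v)).hasGradientAt.hasFDerivAt
    exact h2.comp_hasDerivAt t h1
  have hcont : Continuous (fun t : ℝ => ⟪gradient f (x + t • v), v⟫_ℝ) := by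
    exact (hgc.comp (by continuity)).inner continuous_const
  have hmain : f (x + v) - f x = ∫ t in (0:ℝ)..1, ⟪gradient f (x + t • v), v⟫_ℝ := by
    have := intervalIntegral.integral_eq_sub_of_hasDerivAt (f := fun t : ℝ => f (x + t • v))
      (fun t _ => hcurve t) (hcont.intervalIntegrable 0 1)
    simpa using this.symm
  have hb : ∫ t in (0:ℝ)..1, ⟪gradient f (x + t • v), v⟫_ℝ
      ≤ ∫ t in (0:ℝ)..1, (⟪gradient f x, v⟫_ℝ + L * t * ‖v‖ ^ 2) := by
    apply intervalIntegral.integral_mono_on (by norm_num) (hcont.intervalIntegrable 0 1)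
      ((by continuity : Continuous fun t : ℝ =>
        ⟪gradient f x, v⟫_ℝ + L * t * ‖v‖ ^ 2).intervalIntegrable 0 1)
    intro t ht
    rw [Set.mem_Icc] at ht
    have h3 : ⟪gradient f (x + t • v) - gradient f x, v⟫_ℝ ≤ L * t * ‖v‖ ^ 2 := by
      calc ⟪gradient f (x + t • v) - gradient f x, v⟫_ℝ
          ≤ ‖gradient f (x + t • v) - gradient f x‖ * ‖v‖ := real_inner_le_norm _ _
        _ ≤ (L * ‖(x + t • v) - x‖) * ‖v‖ := by
            gcongr; exact hlip _ _
        _ = L * t * ‖v‖ ^ 2 := by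
            simp [norm_smul, abs_of_nonneg ht.1]; ring
    have := inner_sub_left (𝕜 := ℝ) (gradient f (x + t • v)) (gradient f x) v
    linarith [h3, this.symm.le, this.le]
  have hrhs : ∫ t in (0:ℝ)..1, (⟪gradient f x, v⟫_ℝ + L * t * ‖v‖ ^ 2)
      = ⟪gradient f x, v⟫_ℝ + L / 2 * ‖v‖ ^ 2 := by
    rw [intervalIntegral.integral_add (intervalIntegrable_const)
      ((by continuity : Continuous fun t : ℝ => L * t * ‖v‖ ^ 2).intervalIntegrable 0 1)]
    have : ∫ t in (0:ℝ)..1, L * t * ‖v‖ ^ 2 = L / 2 * ‖v‖ ^ 2 := by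
      have : (fun t : ℝ => L * t * ‖v‖ ^ 2) = fun t : ℝ => t * (L * ‖v‖ ^ 2) := by
        funext t; ring
      rw [this, intervalIntegral.integral_mul_const, integral_id]
      ring
    simp [this]
  linarith [hmain, hb, hrhs.le, hrhs.ge]

lemma Zmat_symm' {n d s : ℕ} (M : Matrix (Fin n) (Fin d) ℝ) (G : Matrix (Fin n) (Fin s) ℝ) :
    (Zmat M G)ᵀ = Zmat M G := by
  have hAt : (Gᵀ * M * Mᵀ * G)ᵀ = Gᵀ * M * Mᵀ * G := by
    simp [Matrix.transpose_mul, Matrix.mul_assoc]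
  simp [Zmat, Matrix.transpose_sub, Matrix.transpose_mul, Matrix.transpose_nonsing_inv, hAt,
    Matrix.mul_assoc]

lemma Zmat_idem' {n d s : ℕ} (M : Matrix (Fin n) (Fin d) ℝ) (G : Matrix (Fin n) (Fin s) ℝ)
    (hpd : (Gᵀ * M * Mᵀ * G).PosDef) : Zmat M G * Zmat M G = Zmat M G := by
  set A := Gᵀ * M * Mᵀ * G with hA
  have hinv : A⁻¹ * A = 1 := Matrix.nonsing_inv_mul A (isUnit_iff_ne_zero.mpr hpd.det_pos.ne')
  have hP : (Mᵀ * G * A⁻¹ * Gᵀ * M) * (Mᵀ * G * A⁻¹ * Gᵀ * M) = Mᵀ * G * A⁻¹ * Gᵀ * M := by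
    calc (Mᵀ * G * A⁻¹ * Gᵀ * M) * (Mᵀ * G * A⁻¹ * Gᵀ * M)
        = Mᵀ * G * A⁻¹ * (Gᵀ * M * Mᵀ * G) * (A⁻¹ * Gᵀ * M) := by
          simp only [Matrix.mul_assoc]
      _ = Mᵀ * G * (A⁻¹ * A) * (A⁻¹ * Gᵀ * M) := by rw [← hA]; simp only [Matrix.mul_assoc]
      _ = Mᵀ * G * A⁻¹ * Gᵀ * M := by rw [hinv]; simp only [Matrix.mul_one, Matrix.mul_assoc]
  simp only [Zmat, ← hA, Matrix.sub_mul, Matrix.mul_sub, Matrix.one_mul, Matrix.mul_one, hP]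
  abel

lemma key_inner' {n d s : ℕ} (M : Matrix (Fin n) (Fin d) ℝ) (G : Matrix (Fin n) (Fin s) ℝ)
    (hpd : (Gᵀ * M * Mᵀ * G).PosDef) (g : EuclideanSpace ℝ (Fin n)) :
    ⟪g, mulVecE M (mulVecE (Zmat M G) (mulVecE Mᵀ g))⟫_ℝ
      = ‖mulVecE (Zmat M G) (mulVecE Mᵀ g)‖ ^ 2 := by
  have hsymm := Zmat_symm' M G
  have hidem := Zmat_idem' M G hpd
  set Z := Zmat M G
  set g' : Fin n → ℝ := (WithLp.equiv 2 _) g with hg'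
  set w' : Fin d → ℝ := Mᵀ.mulVec g' with hw'
  have hZZ : Z *ᵥ (Z *ᵥ w') = Z *ᵥ w' := by
    rw [Matrix.mulVec_mulVec, hidem]
  rw [← real_inner_self_eq_norm_sq]
  simp only [mulVecE, EuclideanSpace.inner_eq_star_dotProduct, Equiv.apply_symm_apply]
  simp only [star_trivial, ← hg', ← hw']
  show (M *ᵥ (Z *ᵥ w')) ⬝ᵥ g' = (Z *ᵥ w') ⬝ᵥ (Z *ᵥ w')
  rw [dotProduct_comm]
  calc g' ⬝ᵥ (M *ᵥ (Z *ᵥ w'))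
      = (g' ᵥ* M) ⬝ᵥ (Z *ᵥ w') := by rw [Matrix.dotProduct_mulVec]
    _ = w' ⬝ᵥ (Z *ᵥ w') := by rw [← Matrix.mulVec_transpose]
    _ = (Z *ᵥ w') ⬝ᵥ (Z *ᵥ w') := by
        symm
        rw [Matrix.dotProduct_mulVec (Z *ᵥ w') Z w', ← Matrix.mulVec_transpose, hsymm, hZZ,
          dotProduct_comm]

theorem stmt0 {n d s : ℕ} (hn : 0 < n) (hd : 0 < d) (hs : 0 < s)
    (f : EuclideanSpace ℝ (Fin n) → ℝ) (L : ℝ) (hL : 0 ≤ L)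
    (hdiff : Differentiable ℝ f)
    (hlip : ∀ x y, ‖gradient f x - gradient f y‖ ≤ L * ‖x - y‖)
    (M : Matrix (Fin n) (Fin d) ℝ) (G : Matrix (Fin n) (Fin s) ℝ)
    (hpd : (Gᵀ * M * Mᵀ * G).PosDef)
    (x : EuclideanSpace ℝ (Fin n)) (α ε : ℝ) (hα : 0 ≤ α) (hε : 0 < ε)
    (hnorm : ‖mulVecE M (mulVecE (Zmat M G) (mulVecE Mᵀ (gradient f x)))‖ ^ 2
        ≤ ((1 + ε) / n) * ‖mulVecE (Zmat M G) (mulVecE Mᵀ (gradient f x))‖ ^ 2) :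
    f (x - α • mulVecE M (mulVecE (Zmat M G) (mulVecE Mᵀ (gradient f x))))
      ≤ f x - (α - L * α ^ 2 * (1 + ε) / (2 * n)) *
          ‖mulVecE (Zmat M G) (mulVecE Mᵀ (gradient f x))‖ ^ 2 := by
  set g := gradient f x with hg
  set z := mulVecE (Zmat M G) (mulVecE Mᵀ g) with hz
  set u := mulVecE M z with hu
  have hkey : ⟪g, u⟫_ℝ = ‖z‖ ^ 2 := key_inner' M G hpd g
  have hdesc := descent_lemma' f L hL hdiff hlip x (-(α • u))
  have hx : x + -(α • u) = x - α • u := by abel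
  rw [hx] at hdesc
  have hinner : ⟪g, -(α • u)⟫_ℝ = -(α * ‖z‖ ^ 2) := by
    rw [inner_neg_right, real_inner_smul_right, hkey]
  have hnorm2 : ‖-(α • u)‖ ^ 2 = α ^ 2 * ‖u‖ ^ 2 := by
    rw [norm_neg, norm_smul]
    simp [abs_of_nonneg hα]
    ring
  rw [hinner, hnorm2] at hdesc
  have hn' : (0:ℝ) < n := by exact_mod_cast hn
  have hbu : L / 2 * (α ^ 2 * ‖u‖ ^ 2) ≤ L / 2 * (α ^ 2 * ((1 + ε) / n * ‖z‖ ^ 2)) := by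
    have h0 : 0 ≤ L / 2 * α ^ 2 := by positivity
    nlinarith [hnorm]
  have heq : f x + -(α * ‖z‖ ^ 2) + L / 2 * (α ^ 2 * ((1 + ε) / n * ‖z‖ ^ 2))
      = f x - (α - L * α ^ 2 * (1 + ε) / (2 * n)) * ‖z‖ ^ 2 := by
    field_simp
    ring
  linarith [hdesc, hbu, heq.le, heq.ge]
end

section
/- Let M be an n×d real matrix and G an n×s real matrix with GᵀMMᵀG positive definite. For v ∈ ℝⁿ set λ := −(GᵀMMᵀG)⁻¹GᵀMMᵀv and d_k := −(d/n)·MᵀG(GᵀMMᵀG)⁻¹[−λ]₊, where [a]₊ is the componentwise positive part. Then ⟨v, M d_k⟩ = −(d/n)·‖[−λ]₊‖². In particular, if [−λ]₊ ≠ 0 then M d_k is a descent direction for any function whose gradient at the current point equals v. -/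
/-!
The Gram matrix `A = GᵀMMᵀG` is symmetric, hence so is `A⁻¹`, and the transpose of
`MMᵀGA⁻¹` is `A⁻¹GᵀMMᵀ`, which sends `v` to `-λ`. Therefore
`⟪v, M d_k⟫ = -(d/n) ⟪-λ, [-λ]₊⟫ = -(d/n) ‖[-λ]₊‖²`, because `a [a]₊ = [a]₊²` coordinatewise.
-/

open Matrix InnerProductSpace

/-- `λ(v) = -(GᵀMMᵀG)⁻¹GᵀMMᵀv`. -/
noncomputable def lamVec {n d s : Type*} [Fintype n] [Fintype d] [Fintype s] [DecidableEq s]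
    (M : Matrix n d ℝ) (G : Matrix n s ℝ) (v : EuclideanSpace ℝ n) : EuclideanSpace ℝ s :=
  -(mulVecE ((Gᵀ * M * Mᵀ * G)⁻¹ * Gᵀ * M * Mᵀ) v)

/-- Componentwise positive part `[a]₊`. -/
noncomputable def posPartE {s : Type*} (a : EuclideanSpace ℝ s) : EuclideanSpace ℝ s :=
  (WithLp.equiv 2 (s → ℝ)).symm (fun i => max ((WithLp.equiv 2 (s → ℝ)) a i) 0)

/-- Smallest eigenvalue of a (symmetric) real matrix. -/
noncomputable def lambdaMin {s : Type*} [Fintype s] (A : Matrix s s ℝ) : ℝ :=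
  sInf {r : ℝ | ∃ v : s → ℝ, v ≠ 0 ∧ A.mulVec v = r • v}

section MulVecE

variable {m n o : Type*} [Fintype n]

lemma mulVecE_neg (A : Matrix m n ℝ) (v : EuclideanSpace ℝ n) :
    mulVecE A (-v) = -mulVecE A v := by
  simp [mulVecE, Matrix.mulVec_neg]

lemma mulVecE_smul (A : Matrix m n ℝ) (c : ℝ) (v : EuclideanSpace ℝ n) :
    mulVecE A (c • v) = c • mulVecE A v := by
  simp [mulVecE, Matrix.mulVec_smul]

lemma mulVecE_mulVecE [Fintype o] (A : Matrix m n ℝ) (B : Matrix n o ℝ)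
    (v : EuclideanSpace ℝ o) : mulVecE A (mulVecE B v) = mulVecE (A * B) v := by
  simp [mulVecE, Matrix.mulVec_mulVec]

lemma inner_mulVecE_right [Fintype m] (A : Matrix m n ℝ) (x : EuclideanSpace ℝ m)
    (y : EuclideanSpace ℝ n) : ⟪x, mulVecE A y⟫_ℝ = ⟪mulVecE Aᵀ x, y⟫_ℝ := by
  simp only [EuclideanSpace.inner_eq_star_dotProduct, mulVecE, star_trivial]
  simp [Matrix.dotProduct_mulVec, Matrix.vecMul_transpose, dotProduct_comm]

end MulVecE

lemma inner_posPartE_self {s : Type*} [Fintype s] (a : EuclideanSpace ℝ s) :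
    ⟪a, posPartE a⟫_ℝ = ‖posPartE a‖ ^ 2 := by
  rw [← real_inner_self_eq_norm_sq]
  simp only [EuclideanSpace.inner_eq_star_dotProduct, posPartE, star_trivial, dotProduct]
  refine Finset.sum_congr rfl fun i _ => ?_
  rcases le_total (a i) 0 with h | h <;> simp [h]

lemma transpose_mul_gram_inv {n d s : Type*} [Fintype n] [Fintype d] [Fintype s] [DecidableEq s]
    (M : Matrix n d ℝ) (G : Matrix n s ℝ) :
    (M * (Mᵀ * G * (Gᵀ * M * Mᵀ * G)⁻¹))ᵀ = (Gᵀ * M * Mᵀ * G)⁻¹ * Gᵀ * M * Mᵀ := by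
  simp [Matrix.transpose_mul, Matrix.transpose_nonsing_inv, Matrix.mul_assoc]

lemma inner_mulVecE_posPartE_neg_lamVec {n d s : Type*} [Fintype n] [Fintype d] [Fintype s]
    [DecidableEq s] (M : Matrix n d ℝ) (G : Matrix n s ℝ) (v : EuclideanSpace ℝ n) :
    ⟪v, mulVecE (M * (Mᵀ * G * (Gᵀ * M * Mᵀ * G)⁻¹)) (posPartE (-lamVec M G v))⟫_ℝ =
      ‖posPartE (-lamVec M G v)‖ ^ 2 := by
  have hadj : mulVecE (M * (Mᵀ * G * (Gᵀ * M * Mᵀ * G)⁻¹))ᵀ v = -lamVec M G v := by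
    rw [transpose_mul_gram_inv, lamVec, neg_neg]
  rw [inner_mulVecE_right, hadj, inner_posPartE_self]

theorem stmt2_general {n d s : ℕ} (hn : 0 < n) (hd : 0 < d)
    (M : Matrix (Fin n) (Fin d) ℝ) (G : Matrix (Fin n) (Fin s) ℝ)
    (v : EuclideanSpace ℝ (Fin n))
    (dk : EuclideanSpace ℝ (Fin d))
    (hdk : dk = -(((d : ℝ) / n) •
        mulVecE (Mᵀ * G * (Gᵀ * M * Mᵀ * G)⁻¹) (posPartE (-(lamVec M G v))))) :
    ⟪v, mulVecE M dk⟫_ℝ = -((d : ℝ) / n) * ‖posPartE (-(lamVec M G v))‖ ^ 2 ∧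
    (posPartE (-(lamVec M G v)) ≠ 0 → ⟪v, mulVecE M dk⟫_ℝ < 0) := by
  have hinner : ⟪v, mulVecE M dk⟫_ℝ = -((d : ℝ) / n) * ‖posPartE (-(lamVec M G v))‖ ^ 2 := by
    rw [hdk, mulVecE_neg, mulVecE_smul, mulVecE_mulVecE, inner_neg_right, real_inner_smul_right,
      inner_mulVecE_posPartE_neg_lamVec, neg_mul]
  refine ⟨hinner, fun hpos => ?_⟩
  have hdn : 0 < (d : ℝ) / n := by positivity
  rw [hinner, neg_mul, neg_neg_iff_pos]
  exact mul_pos hdn (pow_pos (norm_pos_iff.mpr hpos) 2)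

theorem stmt2 {n d s : ℕ} (hn : 0 < n) (hd : 0 < d) (hs : 0 < s)
    (M : Matrix (Fin n) (Fin d) ℝ) (G : Matrix (Fin n) (Fin s) ℝ)
    (hpd : (Gᵀ * M * Mᵀ * G).PosDef)
    (v : EuclideanSpace ℝ (Fin n))
    (dk : EuclideanSpace ℝ (Fin d))
    (hdk : dk = -(((d : ℝ) / n) •
        mulVecE (Mᵀ * G * (Gᵀ * M * Mᵀ * G)⁻¹) (posPartE (-(lamVec M G v))))) :
    ⟪v, mulVecE M dk⟫_ℝ = -((d : ℝ) / n) * ‖posPartE (-(lamVec M G v))‖ ^ 2 ∧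
    (posPartE (-(lamVec M G v)) ≠ 0 → ⟪v, mulVecE M dk⟫_ℝ < 0) :=
  stmt2_general hn hd M G v dk hdk
end

section
/- Consider affine constraints g_i(y) = ⟨a_i, y⟩ + b_i for i = 1,…,m, and let x ∈ ℝⁿ be feasible (g_i(x) ≤ 0 for all i). Fix ε₀ > 0, let A := { i : max(−g_i(x),0) ≤ ε₀‖a_i‖ }, let G be the n×|A| matrix with columns (a_i)_{i∈A}, assume GᵀMMᵀG is positive definite. Let v ∈ ℝⁿ with ‖v‖ ≤ U_f (U_f > 0), set λ := −(GᵀMMᵀG)⁻¹GᵀMMᵀv and d_k := −(d/n)·MᵀG(GᵀMMᵀG)⁻¹[−λ]₊. Suppose ε ∈ (0,1) and λ* > 0 satisfy: ‖Mᵀa_i‖ ≤ √(d(1+ε)/n²)·‖a_i‖ for every i ∉ A, ‖Mᵀv‖ ≤ √(d(1+ε)/n²)·U_f, λ_min(GᵀMMᵀG) ≥ (d(1−ε)/n²)·λ*, and λ* ≤ λ_min(GᵀG). If 0 ≤ α ≤ (n/d)·((1−ε)·λ*/((1+ε)·U_f))·ε₀, then x⁺ := x + α·M d_k is feasible: g_i(x⁺)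 ≤ 0 for all i = 1,…,m. -/
open Matrix InnerProductSpace

lemma mulVecE_mul {l m n : Type*} [Fintype m] [Fintype n] (A : Matrix l m ℝ) (B : Matrix m n ℝ)
    (v : EuclideanSpace ℝ n) : mulVecE (A * B) v = mulVecE A (mulVecE B v) := by
  simp [mulVecE, Matrix.mulVec_mulVec]

lemma inner_mulVecE {m n : Type*} [Fintype m] [Fintype n] (A : Matrix m n ℝ)
    (u : EuclideanSpace ℝ m) (w : EuclideanSpace ℝ n) :
    ⟪u, mulVecE A w⟫_ℝ = ⟪mulVecE Aᵀ u, w⟫_ℝ := by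
  simp only [mulVecE, PiLp.inner_apply, RCLike.inner_apply, conj_trivial,
    WithLp.equiv_symm_apply, WithLp.equiv_apply, PiLp.toLp_apply, Matrix.mulVec, dotProduct, Matrix.transpose_apply,
    Finset.mul_sum, Finset.sum_mul]
  rw [Finset.sum_comm]
  apply Finset.sum_congr rfl; intro i _; apply Finset.sum_congr rfl; intro j _
  ring

lemma mulVecE_neg_smul {m n : Type*} [Fintype n] (A : Matrix m n ℝ) (c : ℝ)
    (u : EuclideanSpace ℝ n) : mulVecE A (-(c • u)) = -(c • mulVecE A u) := by
  ext j
  simp [mulVecE, Matrix.mulVec_neg, Matrix.mulVec_smul]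

lemma quad_eq_sum {s : Type*} [Fintype s] [DecidableEq s]
    {S : Matrix s s ℝ} (hS : S.IsHermitian) (x : EuclideanSpace ℝ s) :
    ⟪x, mulVecE S x⟫_ℝ = ∑ i, hS.eigenvalues i * (⟪hS.eigenvectorBasis i, x⟫_ℝ)^2 := by
  set b := hS.eigenvectorBasis with hbdef
  have hb : ∀ i, mulVecE S (b i) = hS.eigenvalues i • b i := by
    intro i
    have := hS.mulVec_eigenvectorBasis i
    ext j
    have h2 := congrFun this j
    simpa [mulVecE, WithLp.equiv_symm_apply, WithLp.equiv_apply, PiLp.toLp_apply] using h2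
  have hsym : Sᵀ = S := hS
  have h2 : ∀ i, ⟪b i, mulVecE S x⟫_ℝ = hS.eigenvalues i * ⟪b i, x⟫_ℝ := by
    intro i
    rw [inner_mulVecE, hsym, hb i, real_inner_smul_left]
  rw [← b.sum_inner_mul_inner x (mulVecE S x)]
  apply Finset.sum_congr rfl
  intro i _
  rw [h2 i, real_inner_comm x (b i)]
  ring

lemma norm_sq_eq_sum {s : Type*} [Fintype s] [DecidableEq s]
    {S : Matrix s s ℝ} (hS : S.IsHermitian) (x : EuclideanSpace ℝ s) :
    ‖x‖ ^ 2 = ∑ i, (⟪hS.eigenvectorBasis i, x⟫_ℝ)^2 := by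
  rw [← real_inner_self_eq_norm_sq, ← hS.eigenvectorBasis.sum_inner_mul_inner x x]
  apply Finset.sum_congr rfl
  intro i _
  rw [real_inner_comm x (hS.eigenvectorBasis i)]
  ring

lemma inf_eigen_le_quad {s : Type*} [Fintype s] [DecidableEq s] [Nonempty s]
    {S : Matrix s s ℝ} (hS : S.IsHermitian) (x : EuclideanSpace ℝ s) :
    (Finset.univ.inf' Finset.univ_nonempty hS.eigenvalues) * ‖x‖ ^ 2 ≤ ⟪x, mulVecE S x⟫_ℝ := by
  rw [quad_eq_sum hS x, norm_sq_eq_sum hS x, Finset.mul_sum]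
  apply Finset.sum_le_sum
  intro i _
  have h1 : (Finset.univ.inf' Finset.univ_nonempty hS.eigenvalues) ≤ hS.eigenvalues i :=
    Finset.inf'_le _ (Finset.mem_univ i)
  nlinarith [sq_nonneg (⟪hS.eigenvectorBasis i, x⟫_ℝ)]

lemma lambdaMin_mul_norm_sq_le {s : Type*} [Fintype s] [DecidableEq s] [Nonempty s]
    {S : Matrix s s ℝ} (hS : S.IsHermitian) (x : EuclideanSpace ℝ s) :
    lambdaMin S * ‖x‖ ^ 2 ≤ ⟪x, mulVecE S x⟫_ℝ := by
  set m0 := Finset.univ.inf' Finset.univ_nonempty hS.eigenvalues with hm0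
  have hlb : ∀ r ∈ {r : ℝ | ∃ v : s → ℝ, v ≠ 0 ∧ S.mulVec v = r • v}, m0 ≤ r := by
    rintro r ⟨v, hv0, hvr⟩
    set y : EuclideanSpace ℝ s := (WithLp.equiv 2 (s → ℝ)).symm v with hy
    have hyn : y ≠ 0 := by simpa [hy] using hv0
    have hquad : ⟪y, mulVecE S y⟫_ℝ = r * ‖y‖ ^ 2 := by
      rw [← real_inner_self_eq_norm_sq]
      simp only [mulVecE, PiLp.inner_apply, RCLike.inner_apply, conj_trivial, hy,
        WithLp.equiv_symm_apply, WithLp.equiv_apply, PiLp.toLp_apply, Equiv.apply_symm_apply, hvr, Finset.mul_sum]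
      apply Finset.sum_congr rfl
      intro i _
      simp [Pi.smul_apply]
      ring
    have h1 := inf_eigen_le_quad hS y
    rw [hquad] at h1
    have hny : 0 < ‖y‖ ^ 2 := by
      have : 0 < ‖y‖ := norm_pos_iff.mpr hyn
      positivity
    nlinarith
  have hbdd : BddBelow {r : ℝ | ∃ v : s → ℝ, v ≠ 0 ∧ S.mulVec v = r • v} := ⟨m0, hlb⟩
  obtain ⟨i0, -, hi0⟩ := Finset.exists_mem_eq_inf' (Finset.univ_nonempty (α := s)) hS.eigenvalues
  have hmem : m0 ∈ {r : ℝ | ∃ v : s → ℝ, v ≠ 0 ∧ S.mulVec v = r • v} := by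
    refine ⟨hS.eigenvectorBasis i0, ?_, ?_⟩
    · have := hS.eigenvectorBasis.orthonormal.ne_zero i0
      intro hc
      apply this
      ext j
      exact congrFun hc j
    · rw [hm0, hi0]
      exact hS.mulVec_eigenvectorBasis i0
  have hle : lambdaMin S ≤ m0 := csInf_le hbdd hmem
  have hx2 : (0:ℝ) ≤ ‖x‖ ^ 2 := by positivity
  calc lambdaMin S * ‖x‖ ^ 2 ≤ m0 * ‖x‖ ^ 2 := by nlinarith
    _ ≤ _ := inf_eigen_le_quad hS x

lemma norm_posPartE_le {s : Type*} [Fintype s] (u : EuclideanSpace ℝ s) :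
    ‖posPartE u‖ ≤ ‖u‖ := by
  rw [EuclideanSpace.norm_eq, EuclideanSpace.norm_eq]
  apply Real.sqrt_le_sqrt
  apply Finset.sum_le_sum
  intro i _
  have h0 : posPartE u i = max (u i) 0 := rfl
  rw [h0, Real.norm_eq_abs, Real.norm_eq_abs, sq_abs, sq_abs]
  rcases le_total (u i) 0 with h | h
  · rw [max_eq_right h]; simpa using sq_nonneg (u i)
  · rw [max_eq_left h]

lemma scalar_id (n d ε lamStar Uf ε₀ : ℝ) (hn : 0 < n) (hd : 0 < d) (h1 : 0 < 1 + ε)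
    (h2 : 0 < 1 - ε) (hls : 0 < lamStar) (hU : 0 < Uf) :
    ((n / d) * ((1 - ε) * lamStar / ((1 + ε) * Uf)) * ε₀) *
      ((d / n) * ((d * (1 + ε)) / n ^ 2 * Uf / ((d * (1 - ε) / n ^ 2) * lamStar))) = ε₀ := by
  field_simp

set_option maxHeartbeats 2000000 in
theorem stmt7 {n d m : ℕ} (hn : 0 < n) (hd : 0 < d) (hm : 0 < m)
    (M : Matrix (Fin n) (Fin d) ℝ)
    (a : Fin m → EuclideanSpace ℝ (Fin n)) (b : Fin m → ℝ)
    (g : Fin m → EuclideanSpace ℝ (Fin n) → ℝ)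
    (hg : ∀ i y, g i y = ⟪a i, y⟫_ℝ + b i)
    (x : EuclideanSpace ℝ (Fin n)) (hfeas : ∀ i, g i x ≤ 0)
    (ε₀ : ℝ) (hε₀ : 0 < ε₀)
    (A : Finset (Fin m))
    (hA : ∀ i, i ∈ A ↔ max (-(g i x)) 0 ≤ ε₀ * ‖a i‖)
    (G : Matrix (Fin n) (↥A) ℝ)
    (hG : ∀ (i : Fin n) (j : ↥A), G i j = (WithLp.equiv 2 (Fin n → ℝ)) (a j) i)
    (hpd : (Gᵀ * M * Mᵀ * G).PosDef)
    (v : EuclideanSpace ℝ (Fin n)) (Uf : ℝ) (hUf : 0 < Uf) (hv : ‖v‖ ≤ Uf)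
    (dk : EuclideanSpace ℝ (Fin d))
    (hdk : dk = -(((d : ℝ) / n) •
        mulVecE (Mᵀ * G * (Gᵀ * M * Mᵀ * G)⁻¹) (posPartE (-(lamVec M G v)))))
    (ε : ℝ) (hε0 : 0 < ε) (hε1 : ε < 1)
    (lamStar : ℝ) (hlamStar : 0 < lamStar)
    (hMa : ∀ i ∉ A, ‖mulVecE Mᵀ (a i)‖ ≤ Real.sqrt ((d * (1 + ε)) / n ^ 2) * ‖a i‖)
    (hMv : ‖mulVecE Mᵀ v‖ ≤ Real.sqrt ((d * (1 + ε)) / n ^ 2) * Uf)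
    (heig : ((d : ℝ) * (1 - ε) / n ^ 2) * lamStar ≤ lambdaMin (Gᵀ * M * Mᵀ * G))
    (hle : lamStar ≤ lambdaMin (Gᵀ * G))
    (α : ℝ) (hα0 : 0 ≤ α)
    (hα1 : α ≤ ((n : ℝ) / d) * ((1 - ε) * lamStar / ((1 + ε) * Uf)) * ε₀) :
    ∀ i, g i (x + α • mulVecE M dk) ≤ 0 := by
  have hn' : (0:ℝ) < n := by exact_mod_cast hn
  have hd' : (0:ℝ) < d := by exact_mod_cast hd
  have h1ε : (0:ℝ) < 1 + ε := by linarith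
  have h1ε' : (0:ℝ) < 1 - ε := by linarith
  obtain ⟨S, hSdef⟩ : ∃ S, S = Gᵀ * M * Mᵀ * G := ⟨_, rfl⟩
  rw [← hSdef] at hpd heig hdk
  have hSher : S.IsHermitian := hpd.isHermitian
  have hdetS : IsUnit S.det := hpd.det_pos.ne'.isUnit
  have hS1 : S * S⁻¹ = 1 := Matrix.mul_nonsing_inv _ hdetS
  have hLpos : 0 < ((d : ℝ) * (1 - ε) / n ^ 2) * lamStar := by positivity
  have hμpos : 0 < lambdaMin S := lt_of_lt_of_le hLpos heig
  haveI hAne : Nonempty ↥A := by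
    by_contra hc
    haveI hE : IsEmpty ↥A := not_nonempty_iff.mp hc
    have hE2 : lambdaMin S = 0 := by
      have hset : {r : ℝ | ∃ v : ↥A → ℝ, v ≠ 0 ∧ S.mulVec v = r • v} = ∅ := by
        ext r
        simp only [Set.mem_setOf_eq, Set.mem_empty_iff_false, iff_false, not_exists]
        intro u
        rintro ⟨hu, -⟩
        exact hu (funext fun j => hE.elim j)
      rw [lambdaMin, hset, Real.sInf_empty]
    rw [hE2] at hμpos; exact lt_irrefl _ hμpos
  have hScancel : ∀ u : EuclideanSpace ℝ ↥A, mulVecE S (mulVecE S⁻¹ u) = u := by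
    intro u
    rw [← mulVecE_mul, hS1]
    simp [mulVecE, Matrix.one_mulVec]
  have hquadS : ∀ q : EuclideanSpace ℝ ↥A, ⟪q, mulVecE S q⟫_ℝ = ‖mulVecE (Mᵀ * G) q‖ ^ 2 := by
    intro q
    have hfac : S = (Gᵀ * M) * (Mᵀ * G) := by rw [hSdef]; exact Matrix.mul_assoc _ _ _
    rw [hfac, mulVecE_mul, inner_mulVecE, Matrix.transpose_mul, Matrix.transpose_transpose,
      real_inner_self_eq_norm_sq]
  have hμquad : ∀ q : EuclideanSpace ℝ ↥A,
      lambdaMin S * ‖q‖ ^ 2 ≤ ‖mulVecE (Mᵀ * G) q‖ ^ 2 := by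
    intro q
    rw [← hquadS q]
    exact lambdaMin_mul_norm_sq_le hSher q
  obtain ⟨w, hw⟩ : ∃ w : EuclideanSpace ℝ (Fin d), w = mulVecE Mᵀ v := ⟨_, rfl⟩
  rw [← hw] at hMv
  obtain ⟨z, hzdef⟩ : ∃ z : EuclideanSpace ℝ ↥A, z = mulVecE S⁻¹ (mulVecE (Gᵀ * M) w) :=
    ⟨_, rfl⟩
  have hnegLam : -(lamVec M G v) = z := by
    rw [hzdef, hw]
    simp only [lamVec, neg_neg]
    rw [← hSdef, ← mulVecE_mul, ← mulVecE_mul]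
    congr 1
    simp only [Matrix.mul_assoc]
  have hnormz : Real.sqrt (lambdaMin S) * ‖z‖ ≤ ‖w‖ := by
    have hSz : mulVecE S z = mulVecE (Gᵀ * M) w := by rw [hzdef]; exact hScancel _
    have e1 : ‖mulVecE (Mᵀ * G) z‖ ^ 2 = ⟪mulVecE (Mᵀ * G) z, w⟫_ℝ := by
      rw [← hquadS z, hSz, inner_mulVecE, Matrix.transpose_mul, Matrix.transpose_transpose]
    have e2 : ⟪mulVecE (Mᵀ * G) z, w⟫_ℝ ≤ ‖mulVecE (Mᵀ * G) z‖ * ‖w‖ := real_inner_le_norm _ _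
    have e3 : ‖mulVecE (Mᵀ * G) z‖ ≤ ‖w‖ := by
      nlinarith [norm_nonneg (mulVecE (Mᵀ * G) z), norm_nonneg w]
    have e4 := hμquad z
    have e5 : lambdaMin S * ‖z‖ ^ 2 ≤ ‖w‖ ^ 2 := by
      nlinarith [norm_nonneg (mulVecE (Mᵀ * G) z), norm_nonneg w]
    nlinarith [Real.sq_sqrt hμpos.le, Real.sqrt_nonneg (lambdaMin S), norm_nonneg z,
      norm_nonneg w]
  obtain ⟨p, hpdef⟩ : ∃ p : EuclideanSpace ℝ ↥A, p = posPartE (-(lamVec M G v)) := ⟨_, rfl⟩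
  rw [← hpdef] at hdk
  have hpz : p = posPartE z := by rw [hpdef, hnegLam]
  have hpnorm : ‖p‖ ≤ ‖z‖ := by rw [hpz]; exact norm_posPartE_le z
  have hpcomp : ∀ j : ↥A, 0 ≤ p j := by
    intro j
    rw [hpz]
    exact le_max_right _ _
  obtain ⟨y, hydef⟩ : ∃ y : EuclideanSpace ℝ ↥A, y = mulVecE S⁻¹ p := ⟨_, rfl⟩
  have hSy : mulVecE S y = p := by rw [hydef]; exact hScancel p
  have hyquad : ‖mulVecE (Mᵀ * G) y‖ ^ 2 = ⟪y, p⟫_ℝ := by rw [← hquadS y, hSy]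
  have hinner_yp : ⟪y, p⟫_ℝ ≤ ‖y‖ * ‖p‖ := real_inner_le_norm _ _
  have hμy : lambdaMin S * ‖y‖ ≤ ‖p‖ := by
    rcases eq_or_ne ‖y‖ 0 with h | h
    · rw [h, mul_zero]; exact norm_nonneg p
    · have hy0 : 0 < ‖y‖ := lt_of_le_of_ne (norm_nonneg y) (Ne.symm h)
      have e4 := hμquad y
      nlinarith
  have hdky : Real.sqrt (lambdaMin S) * ‖mulVecE (Mᵀ * G) y‖ ≤ ‖p‖ := by
    have h5 : lambdaMin S * ‖mulVecE (Mᵀ * G) y‖ ^ 2 ≤ ‖p‖ ^ 2 := by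
      nlinarith [norm_nonneg y, norm_nonneg p]
    nlinarith [Real.sq_sqrt hμpos.le, Real.sqrt_nonneg (lambdaMin S),
      norm_nonneg (mulVecE (Mᵀ * G) y), norm_nonneg p]
  have hkey : lambdaMin S * ‖mulVecE (Mᵀ * G) y‖ ≤ ‖w‖ := by
    have h6 : Real.sqrt (lambdaMin S) * ‖p‖ ≤ ‖w‖ := by
      calc Real.sqrt (lambdaMin S) * ‖p‖ ≤ Real.sqrt (lambdaMin S) * ‖z‖ :=
            mul_le_mul_of_nonneg_left hpnorm (Real.sqrt_nonneg _)
        _ ≤ ‖w‖ := hnormz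
    nlinarith [Real.sq_sqrt hμpos.le, Real.sqrt_nonneg (lambdaMin S),
      norm_nonneg (mulVecE (Mᵀ * G) y), norm_nonneg p]
  have hdkval : dk = -(((d : ℝ) / n) • mulVecE (Mᵀ * G) y) := by
    rw [hdk, mulVecE_mul, ← hydef]
  have hdknorm : ‖dk‖ = ((d : ℝ) / n) * ‖mulVecE (Mᵀ * G) y‖ := by
    rw [hdkval, norm_neg, norm_smul, Real.norm_eq_abs, abs_of_nonneg (by positivity)]
  have hGMdk : mulVecE Gᵀ (mulVecE M dk) = -(((d : ℝ) / n) • p) := by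
    rw [← mulVecE_mul, hdkval, mulVecE_neg_smul]
    congr 2
    rw [← mulVecE_mul]
    have hfac : (Gᵀ * M) * (Mᵀ * G) = S := by rw [hSdef]; exact (Matrix.mul_assoc _ _ _).symm
    rw [hfac, hSy]
  intro i
  have hexp : g i (x + α • mulVecE M dk) = g i x + α * ⟪a i, mulVecE M dk⟫_ℝ := by
    rw [hg, hg, inner_add_right, real_inner_smul_right]
    ring
  rw [hexp]
  by_cases hiA : i ∈ A
  · have h1 : ⟪a i, mulVecE M dk⟫_ℝ = (mulVecE Gᵀ (mulVecE M dk)) ⟨i, hiA⟩ := by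
      simp only [mulVecE, PiLp.inner_apply, RCLike.inner_apply, conj_trivial,
        WithLp.equiv_symm_apply, WithLp.equiv_apply, PiLp.toLp_apply, Matrix.mulVec, dotProduct, Matrix.transpose_apply]
      apply Finset.sum_congr rfl
      intro r _
      rw [hG r ⟨i, hiA⟩]
      simp only [WithLp.equiv_apply, WithLp.equiv_symm_apply, WithLp.equiv_apply, PiLp.toLp_apply, Matrix.mulVec,
        dotProduct]
      ring
    have hcomp : ⟪a i, mulVecE M dk⟫_ℝ = -(((d : ℝ) / n) * p ⟨i, hiA⟩) := by
      rw [h1, hGMdk]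
      rfl
    rw [hcomp]
    have hpj := hpcomp ⟨i, hiA⟩
    have hdn : (0:ℝ) ≤ (d : ℝ) / n := by positivity
    have h2 : 0 ≤ α * (((d : ℝ) / n) * p ⟨i, hiA⟩) :=
      mul_nonneg hα0 (mul_nonneg hdn hpj)
    linarith [hfeas i]
  · have hna : (0:ℝ) ≤ ‖a i‖ := norm_nonneg _
    have hMai := hMa i hiA
    have hgi : ε₀ * ‖a i‖ < -(g i x) := by
      have h3 : ¬ (max (-(g i x)) 0 ≤ ε₀ * ‖a i‖) := fun h => hiA ((hA i).mpr h)
      have h4 : max (-(g i x)) 0 = -(g i x) := max_eq_left (by linarith [hfeas i])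
      rw [h4] at h3
      linarith [not_le.mp h3]
    obtain ⟨t, htdef⟩ : ∃ t, t = ‖mulVecE (Mᵀ * G) y‖ := ⟨_, rfl⟩
    rw [← htdef] at hkey hdknorm
    have htnn : 0 ≤ t := htdef ▸ norm_nonneg _
    obtain ⟨c, hcdef⟩ : ∃ c, c = Real.sqrt (((d : ℝ) * (1 + ε)) / (n : ℝ) ^ 2) := ⟨_, rfl⟩
    rw [← hcdef] at hMv hMai
    have hcnn : 0 ≤ c := hcdef ▸ Real.sqrt_nonneg _
    have hc2 : c ^ 2 = ((d : ℝ) * (1 + ε)) / (n : ℝ) ^ 2 := by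
      rw [hcdef]; exact Real.sq_sqrt (by positivity)
    obtain ⟨L, hLdef⟩ : ∃ L, L = ((d : ℝ) * (1 - ε) / n ^ 2) * lamStar := ⟨_, rfl⟩
    rw [← hLdef] at heig hLpos
    have hwU : ‖w‖ ≤ c * Uf := hMv
    have htb : t ≤ c * Uf / L := by
      rw [le_div_iff₀ hLpos]
      calc t * L ≤ t * lambdaMin S := by nlinarith [heig]
        _ = lambdaMin S * t := by ring
        _ ≤ ‖w‖ := hkey
        _ ≤ c * Uf := hwU
    have hinner : ⟪a i, mulVecE M dk⟫_ℝ ≤ ‖mulVecE Mᵀ (a i)‖ * ‖dk‖ := by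
      rw [inner_mulVecE]
      exact real_inner_le_norm _ _
    have hprod : ‖mulVecE Mᵀ (a i)‖ * ‖dk‖ ≤ (c * ‖a i‖) * (((d : ℝ) / n) * t) := by
      rw [hdknorm]
      have h0 : (0:ℝ) ≤ ((d:ℝ)/n) * t := by positivity
      exact mul_le_mul hMai (le_refl _) h0 (by positivity)
    have hsc : α * (((d : ℝ) / n) * (c * (c * Uf / L))) ≤ ε₀ := by
      have hR : ((d : ℝ) / n) * (c * (c * Uf / L))
          = ((d : ℝ) / n) * (((d : ℝ) * (1 + ε)) / (n : ℝ) ^ 2 * Uf / L) := by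
        rw [← hc2]; ring
      have hRnn : 0 ≤ ((d : ℝ) / n) * (((d : ℝ) * (1 + ε)) / (n : ℝ) ^ 2 * Uf / L) := by
        positivity
      have hAK : (((n : ℝ) / d) * ((1 - ε) * lamStar / ((1 + ε) * Uf)) * ε₀) *
          (((d : ℝ) / n) * (((d : ℝ) * (1 + ε)) / (n : ℝ) ^ 2 * Uf / L)) = ε₀ := by
        rw [hLdef]
        exact scalar_id _ _ _ _ _ _ hn' hd' h1ε h1ε' hlamStar hUf
      rw [hR]
      calc α * (((d : ℝ) / n) * (((d : ℝ) * (1 + ε)) / (n : ℝ) ^ 2 * Uf / L))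
          ≤ (((n : ℝ) / d) * ((1 - ε) * lamStar / ((1 + ε) * Uf)) * ε₀) *
            (((d : ℝ) / n) * (((d : ℝ) * (1 + ε)) / (n : ℝ) ^ 2 * Uf / L)) :=
            mul_le_mul_of_nonneg_right hα1 hRnn
        _ = ε₀ := hAK
    have hfinal : α * ⟪a i, mulVecE M dk⟫_ℝ ≤ ε₀ * ‖a i‖ := by
      calc α * ⟪a i, mulVecE M dk⟫_ℝ
          ≤ α * (‖mulVecE Mᵀ (a i)‖ * ‖dk‖) := mul_le_mul_of_nonneg_left hinner hα0
        _ ≤ α * ((c * ‖a i‖) * (((d : ℝ) / n) * t)) := mul_le_mul_of_nonneg_left hprod hα0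
        _ = ‖a i‖ * (α * (((d : ℝ) / n) * (c * t))) := by ring
        _ ≤ ‖a i‖ * (α * (((d : ℝ) / n) * (c * (c * Uf / L)))) := by
            apply mul_le_mul_of_nonneg_left _ hna
            apply mul_le_mul_of_nonneg_left _ hα0
            apply mul_le_mul_of_nonneg_left _ (by positivity : (0:ℝ) ≤ (d : ℝ) / n)
            exact mul_le_mul_of_nonneg_left htb hcnn
        _ ≤ ‖a i‖ * ε₀ := mul_le_mul_of_nonneg_left hsc hna
        _ = ε₀ * ‖a i‖ := by ring
    linarith [hgi, hfinal]
end

section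
/- Let M be an n×d real matrix and G an n×s real matrix with GᵀMMᵀG positive definite. Let v ∈ ℝⁿ with Mᵀv ≠ 0 and let σ ∈ ℝ^s be nonzero. Set μ := 1/(2√(σᵀ(GᵀMMᵀG)⁻¹σ)), ν := μ·σ/‖Mᵀv‖, and λ := −(GᵀMMᵀG)⁻¹GᵀMMᵀv. Then |⟨ν, λ⟩| ≤ 1/2, and consequently 1/2 ≤ 1 + ⟨ν, λ⟩ ≤ 3/2. -/
open Matrix InnerProductSpace

lemma inner_eq_dot {k : Type*} [Fintype k] (x y : EuclideanSpace ℝ k) :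
    ⟪x, y⟫_ℝ = (WithLp.equiv 2 (k → ℝ)) x ⬝ᵥ (WithLp.equiv 2 (k → ℝ)) y := by
  simp [PiLp.inner_apply, dotProduct, RCLike.inner_apply]
  exact Finset.sum_congr rfl fun _ _ => mul_comm _ _

lemma dot_self_nonneg' {k : Type*} [Fintype k] (x : k → ℝ) : 0 ≤ x ⬝ᵥ x :=
  Finset.sum_nonneg fun _ _ => mul_self_nonneg _

lemma abs_dot_le {k : Type*} [Fintype k] (x y : k → ℝ) :
    |x ⬝ᵥ y| ≤ Real.sqrt (x ⬝ᵥ x) * Real.sqrt (y ⬝ᵥ y) := by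
  set ex := (WithLp.equiv 2 (k → ℝ)).symm x with hex
  set ey := (WithLp.equiv 2 (k → ℝ)).symm y with hey
  have h1 : ⟪ex, ey⟫_ℝ = x ⬝ᵥ y := by rw [inner_eq_dot]; simp [hex, hey]
  have h2x : ⟪ex, ex⟫_ℝ = x ⬝ᵥ x := by rw [inner_eq_dot]; simp [hex]
  have h2y : ⟪ey, ey⟫_ℝ = y ⬝ᵥ y := by rw [inner_eq_dot]; simp [hey]
  rw [← h1, ← h2x, ← h2y, real_inner_self_eq_norm_sq, real_inner_self_eq_norm_sq,
    Real.sqrt_sq (norm_nonneg _), Real.sqrt_sq (norm_nonneg _)]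
  exact abs_real_inner_le_norm ex ey

open scoped MatrixOrder in
lemma psd_dot_eq {k : Type*} [Fintype k] [DecidableEq k] {P : Matrix k k ℝ} (hP : P.PosSemidef) :
    ∃ R : Matrix k k ℝ, ∀ a b : k → ℝ, a ⬝ᵥ P.mulVec b = R.mulVec a ⬝ᵥ R.mulVec b := by
  obtain ⟨B, rfl⟩ := CStarAlgebra.nonneg_iff_eq_star_mul_self.mp hP.nonneg
  refine ⟨B, fun a b => ?_⟩
  rw [← Matrix.mulVec_mulVec, Matrix.dotProduct_mulVec, star_eq_conjTranspose,
    ← Matrix.mulVec_transpose, conjTranspose_eq_transpose_of_trivial, transpose_transpose]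

lemma psd_cauchy {k : Type*} [Fintype k] [DecidableEq k] {P : Matrix k k ℝ} (hP : P.PosSemidef)
    (x y : k → ℝ) :
    |x ⬝ᵥ P.mulVec y| ≤ Real.sqrt (x ⬝ᵥ P.mulVec x) * Real.sqrt (y ⬝ᵥ P.mulVec y) := by
  obtain ⟨R, hR⟩ := psd_dot_eq hP
  rw [hR x y, hR x x, hR y y]
  exact abs_dot_le _ _

lemma proj_bound {k : Type*} [Fintype k] {Q : Matrix k k ℝ} (hQs : Qᵀ = Q) (hQi : Q * Q = Q)
    (w : k → ℝ) : w ⬝ᵥ Q.mulVec w ≤ w ⬝ᵥ w := by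
  have h1 : w ⬝ᵥ Q.mulVec w = Q.mulVec w ⬝ᵥ Q.mulVec w := by
    conv_lhs => rw [← hQi, ← Matrix.mulVec_mulVec, Matrix.dotProduct_mulVec,
      ← Matrix.mulVec_transpose, hQs]
  set c := Real.sqrt (Q.mulVec w ⬝ᵥ Q.mulVec w) with hc
  set sw := Real.sqrt (w ⬝ᵥ w) with hsw
  have hc2 : Q.mulVec w ⬝ᵥ Q.mulVec w = c ^ 2 := (Real.sq_sqrt (dot_self_nonneg' _)).symm
  have hs2 : w ⬝ᵥ w = sw ^ 2 := (Real.sq_sqrt (dot_self_nonneg' _)).symm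
  have hcs : c ^ 2 ≤ sw * c := by
    calc c ^ 2 = w ⬝ᵥ Q.mulVec w := by rw [h1, hc2]
    _ ≤ |w ⬝ᵥ Q.mulVec w| := le_abs_self _
    _ ≤ sw * c := abs_dot_le _ _
  have hcn : 0 ≤ c := Real.sqrt_nonneg _
  have hsn : 0 ≤ sw := Real.sqrt_nonneg _
  rw [h1, hc2, hs2]
  nlinarith [mul_self_nonneg (sw - c)]

/-- The key Cauchy–Schwarz / projection bound at the level of dot products. -/
lemma key_bound {n d s : Type*} [Fintype n] [Fintype d] [Fintype s] [DecidableEq s]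
    (M : Matrix n d ℝ) (G : Matrix n s ℝ) (hpd : (Gᵀ * M * Mᵀ * G).PosDef)
    (v' : n → ℝ) (σ' : s → ℝ) :
    |σ' ⬝ᵥ ((Gᵀ * M * Mᵀ * G)⁻¹ * Gᵀ * M * Mᵀ).mulVec v'| ≤
      Real.sqrt (σ' ⬝ᵥ (Gᵀ * M * Mᵀ * G)⁻¹.mulVec σ') *
        Real.sqrt (Mᵀ.mulVec v' ⬝ᵥ Mᵀ.mulVec v') := by
  set A := Gᵀ * M * Mᵀ * G with hA
  have hdet : IsUnit A.det := hpd.det_pos.ne'.isUnit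
  have hAP : A * A⁻¹ = 1 := Matrix.mul_nonsing_inv A hdet
  have hPpd : (A⁻¹).PosDef := hpd.inv
  have hPsym : (A⁻¹)ᵀ = A⁻¹ := by exact (by simpa using hPpd.1 : A⁻¹.IsSymm)
  set w := Mᵀ.mulVec v' with hw
  set y := (Gᵀ * M).mulVec w with hy
  have h1 : (A⁻¹ * Gᵀ * M * Mᵀ).mulVec v' = (A⁻¹).mulVec y := by
    rw [hy, hw]
    simp only [Matrix.mulVec_mulVec, Matrix.mul_assoc]
  set Q := Mᵀ * G * (A⁻¹ * (Gᵀ * M)) with hQ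
  have hCB : Gᵀ * M * (Mᵀ * G) = A := by rw [hA]; simp only [Matrix.mul_assoc]
  have hQi : Q * Q = Q := by
    rw [hQ]
    calc Mᵀ * G * (A⁻¹ * (Gᵀ * M)) * (Mᵀ * G * (A⁻¹ * (Gᵀ * M)))
        = Mᵀ * G * (A⁻¹ * (Gᵀ * M * (Mᵀ * G) * (A⁻¹ * (Gᵀ * M)))) := by
          simp only [Matrix.mul_assoc]
      _ = Mᵀ * G * (A⁻¹ * (A * A⁻¹ * (Gᵀ * M))) := by
          rw [hCB]; simp only [Matrix.mul_assoc]
      _ = Mᵀ * G * (A⁻¹ * (Gᵀ * M)) := by rw [hAP, Matrix.one_mul]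
  have hQs : Qᵀ = Q := by
    rw [hQ]
    simp only [Matrix.transpose_mul, Matrix.transpose_transpose, hPsym, Matrix.mul_assoc]
  have hyPy : y ⬝ᵥ (A⁻¹).mulVec y = w ⬝ᵥ Q.mulVec w := by
    have hCt : (Gᵀ * M)ᵀ = Mᵀ * G := by
      rw [Matrix.transpose_mul, Matrix.transpose_transpose]
    rw [hy, dotProduct_comm, Matrix.dotProduct_mulVec, ← Matrix.mulVec_transpose,
      dotProduct_comm, Matrix.mulVec_mulVec, Matrix.mulVec_mulVec, hCt, hQ]
    simp only [Matrix.mul_assoc]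
  have hble : y ⬝ᵥ (A⁻¹).mulVec y ≤ w ⬝ᵥ w := by
    rw [hyPy]; exact proj_bound hQs hQi w
  rw [h1]
  calc |σ' ⬝ᵥ (A⁻¹).mulVec y|
      ≤ Real.sqrt (σ' ⬝ᵥ (A⁻¹).mulVec σ') * Real.sqrt (y ⬝ᵥ (A⁻¹).mulVec y) :=
        psd_cauchy hPpd.posSemidef σ' y
    _ ≤ Real.sqrt (σ' ⬝ᵥ (A⁻¹).mulVec σ') * Real.sqrt (w ⬝ᵥ w) := by
        exact mul_le_mul_of_nonneg_left (Real.sqrt_le_sqrt hble) (Real.sqrt_nonneg _)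

theorem stmt11 {n d s : ℕ} (hn : 0 < n) (hd : 0 < d) (hs : 0 < s)
    (M : Matrix (Fin n) (Fin d) ℝ) (G : Matrix (Fin n) (Fin s) ℝ)
    (hpd : (Gᵀ * M * Mᵀ * G).PosDef)
    (v : EuclideanSpace ℝ (Fin n)) (hv : mulVecE Mᵀ v ≠ 0)
    (σ : EuclideanSpace ℝ (Fin s)) (hσ : σ ≠ 0)
    (μ : ℝ) (hμ : μ = 1 / (2 * Real.sqrt ⟪σ, mulVecE ((Gᵀ * M * Mᵀ * G)⁻¹) σ⟫_ℝ))
    (ν : EuclideanSpace ℝ (Fin s)) (hν : ν = (μ / ‖mulVecE Mᵀ v‖) • σ) :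
    |⟪ν, lamVec M G v⟫_ℝ| ≤ 1 / 2 ∧
    1 / 2 ≤ 1 + ⟪ν, lamVec M G v⟫_ℝ ∧
    1 + ⟪ν, lamVec M G v⟫_ℝ ≤ 3 / 2 := by
  have hσ' : (WithLp.equiv 2 (Fin s → ℝ)) σ ≠ 0 := by
    intro h
    exact hσ ((WithLp.equiv 2 (Fin s → ℝ)).injective (by simpa using h))
  set σ' := (WithLp.equiv 2 (Fin s → ℝ)) σ with hσ'def
  set v' := (WithLp.equiv 2 (Fin n → ℝ)) v with hv'def
  set w := Mᵀ.mulVec v' with hwdef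
  -- inner products as dot products
  have hinnP : ⟪σ, mulVecE ((Gᵀ * M * Mᵀ * G)⁻¹) σ⟫_ℝ = σ' ⬝ᵥ (Gᵀ * M * Mᵀ * G)⁻¹.mulVec σ' := by
    rw [inner_eq_dot]; simp [mulVecE]; rfl
  have hsl : ⟪σ, lamVec M G v⟫_ℝ = -(σ' ⬝ᵥ ((Gᵀ * M * Mᵀ * G)⁻¹ * Gᵀ * M * Mᵀ).mulVec v') := by
    rw [lamVec, inner_neg_right, inner_eq_dot]
    simp [mulVecE]; rfl
  have hb2 : ‖mulVecE Mᵀ v‖ ^ 2 = w ⬝ᵥ w := by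
    rw [← real_inner_self_eq_norm_sq, inner_eq_dot]
    simp [mulVecE, hwdef]; rfl
  set b := ‖mulVecE Mᵀ v‖ with hbdef
  have hbpos : 0 < b := norm_pos_iff.mpr hv
  have hbsqrt : Real.sqrt (w ⬝ᵥ w) = b := by
    rw [← hb2, Real.sqrt_sq hbpos.le]
  -- a
  have hσPσ : 0 < σ' ⬝ᵥ (Gᵀ * M * Mᵀ * G)⁻¹.mulVec σ' := by
    have := hpd.inv.re_dotProduct_pos hσ'
    simpa [dotProduct, Matrix.mulVec] using this
  set a := Real.sqrt (σ' ⬝ᵥ (Gᵀ * M * Mᵀ * G)⁻¹.mulVec σ') with hadef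
  have hapos : 0 < a := Real.sqrt_pos.mpr hσPσ
  have hμa : μ = 1 / (2 * a) := by rw [hμ, hinnP, hadef]
  -- key bound
  have hkey : |σ' ⬝ᵥ ((Gᵀ * M * Mᵀ * G)⁻¹ * Gᵀ * M * Mᵀ).mulVec v'| ≤ a * b := by
    calc |σ' ⬝ᵥ ((Gᵀ * M * Mᵀ * G)⁻¹ * Gᵀ * M * Mᵀ).mulVec v'|
        ≤ a * Real.sqrt (w ⬝ᵥ w) := key_bound M G hpd v' σ'
      _ = a * b := by rw [hbsqrt]
  -- conclude
  have habs : |⟪ν, lamVec M G v⟫_ℝ| ≤ 1 / 2 := by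
    rw [hν, real_inner_smul_left, hsl, hμa, abs_mul, abs_neg]
    have h1 : |1 / (2 * a) / b| = 1 / (2 * a) / b := by
      rw [abs_of_pos]; positivity
    rw [h1]
    calc 1 / (2 * a) / b * |σ' ⬝ᵥ ((Gᵀ * M * Mᵀ * G)⁻¹ * Gᵀ * M * Mᵀ).mulVec v'|
        ≤ 1 / (2 * a) / b * (a * b) := by
          apply mul_le_mul_of_nonneg_left hkey; positivity
      _ = 1 / 2 := by field_simp
  have h := abs_le.mp habs
  exact ⟨habs, by linarith [h.1], by linarith [h.2]⟩
end

section
/- Let M be an n×d real matrix and G an n×s real matrix with GᵀMMᵀG positive definite. Let v ∈ ℝⁿ with Mᵀv ≠ 0 and let σ ∈ ℝ^s be nonzero, and set μ := 1/(2√(σᵀ(GᵀMMᵀG)⁻¹σ)). Then the s×s matrix (G − μ·(v σᵀ)/‖Mᵀv‖)ᵀ M Mᵀ G is invertible. -/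
open Matrix InnerProductSpace

theorem stmt12 {n d s : ℕ} (hn : 0 < n) (hd : 0 < d) (hs : 0 < s)
    (M : Matrix (Fin n) (Fin d) ℝ) (G : Matrix (Fin n) (Fin s) ℝ)
    (hpd : (Gᵀ * M * Mᵀ * G).PosDef)
    (v : EuclideanSpace ℝ (Fin n)) (hv : mulVecE Mᵀ v ≠ 0)
    (σ : EuclideanSpace ℝ (Fin s)) (hσ : σ ≠ 0)
    (μ : ℝ) (hμ : μ = 1 / (2 * Real.sqrt ⟪σ, mulVecE ((Gᵀ * M * Mᵀ * G)⁻¹) σ⟫_ℝ)) :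
    IsUnit ((G - (μ / ‖mulVecE Mᵀ v‖) •
        vecMulVec ((WithLp.equiv 2 (Fin n → ℝ)) v) ((WithLp.equiv 2 (Fin s → ℝ)) σ))ᵀ
      * M * Mᵀ * G) := by
  classical
  set v' : Fin n → ℝ := (WithLp.equiv 2 (Fin n → ℝ)) v with hv'
  set σ' : Fin s → ℝ := (WithLp.equiv 2 (Fin s → ℝ)) σ with hσ'
  set A : Matrix (Fin s) (Fin s) ℝ := Gᵀ * M * Mᵀ * G with hA
  have hAdet : IsUnit A.det := hpd.det_pos.ne'.isUnit
  have hAs : Aᵀ = A := by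
    simp [hA, Matrix.transpose_mul, Matrix.mul_assoc]
  have hAinvs : (A⁻¹)ᵀ = A⁻¹ := by
    rw [Matrix.transpose_nonsing_inv, hAs]
  set c : ℝ := μ / ‖mulVecE Mᵀ v‖ with hc
  set r : Fin s → ℝ := v' ᵥ* (M * Mᵀ * G) with hr
  set x : Fin d → ℝ := Mᵀ *ᵥ v' with hx
  set yv : Fin d → ℝ := (Mᵀ * G * A⁻¹) *ᵥ σ' with hyv
  set t : ℝ := σ' ⬝ᵥ A⁻¹ *ᵥ σ' with ht
  have hσ'ne : σ' ≠ 0 := fun h => hσ (by ext i; exact congrFun h i)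
  have htpos : 0 < t := by
    have := (hpd.inv).dotProduct_mulVec_pos hσ'ne
    simpa [ht, star_trivial] using this
  have hinner : ⟪σ, mulVecE A⁻¹ σ⟫_ℝ = t := by
    simp [mulVecE, PiLp.inner_apply, RCLike.inner_apply, dotProduct, ht, hσ', hA, mul_comm]
  have hsq : Real.sqrt t > 0 := Real.sqrt_pos.2 htpos
  have hμpos : 0 < μ := by rw [hμ, hinner]; positivity
  have hμt : μ * Real.sqrt t = 1 / 2 := by
    rw [hμ, hinner]; field_simp
  have hBtB : (Mᵀ * G * A⁻¹)ᵀ * (Mᵀ * G * A⁻¹) = A⁻¹ := by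
    have h1 : (Mᵀ * G * A⁻¹)ᵀ = A⁻¹ * Gᵀ * M := by
      simp [Matrix.transpose_mul, hAinvs, Matrix.mul_assoc]
    rw [h1]
    calc A⁻¹ * Gᵀ * M * (Mᵀ * G * A⁻¹) = A⁻¹ * (Gᵀ * M * Mᵀ * G) * A⁻¹ := by
          simp only [Matrix.mul_assoc]
      _ = A⁻¹ * A * A⁻¹ := by rw [← hA]
      _ = A⁻¹ := by rw [Matrix.nonsing_inv_mul A hAdet, Matrix.one_mul]
  have hyy : yv ⬝ᵥ yv = t := by
    have h2 : σ' ⬝ᵥ ((Mᵀ * G * A⁻¹)ᵀ * (Mᵀ * G * A⁻¹)) *ᵥ σ' = yv ⬝ᵥ yv := by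
      rw [← Matrix.mulVec_mulVec, Matrix.dotProduct_mulVec, Matrix.vecMul_transpose, hyv]
    rw [← h2, hBtB, ht]
  have hrd : r ⬝ᵥ (A⁻¹ *ᵥ σ') = x ⬝ᵥ yv := by
    rw [hr, hx, hyv, Matrix.mulVec_transpose, ← Matrix.dotProduct_mulVec,
      ← Matrix.dotProduct_mulVec]
    simp only [Matrix.mulVec_mulVec, Matrix.mul_assoc]
  -- the structural identity
  set u : Fin s → ℝ := (-c) • σ' with hu
  have hT : (G - c • vecMulVec v' σ')ᵀ * M * Mᵀ * G
      = A + Matrix.replicateCol Unit u * Matrix.replicateRow Unit r := by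
    have hvt : (vecMulVec v' σ')ᵀ = Matrix.replicateCol Unit σ' * Matrix.replicateRow Unit v' := by
      rw [← Matrix.vecMulVec_eq]
      ext i j
      simp [Matrix.vecMulVec_apply, mul_comm]
    rw [Matrix.transpose_sub, Matrix.transpose_smul, hvt]
    rw [Matrix.sub_mul, Matrix.sub_mul, Matrix.sub_mul]
    rw [Matrix.smul_mul, Matrix.smul_mul, Matrix.smul_mul]
    have hrow : Matrix.replicateCol Unit σ' * Matrix.replicateRow Unit v' * M * Mᵀ * G
        = Matrix.replicateCol Unit σ' * Matrix.replicateRow Unit r := by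
      rw [hr, Matrix.replicateRow_vecMul, ← Matrix.mul_assoc, ← Matrix.mul_assoc,
        Matrix.mul_assoc (Matrix.replicateCol Unit σ') _ M, Matrix.mul_assoc (Matrix.replicateCol Unit σ'),
        Matrix.mul_assoc (Matrix.replicateCol Unit σ')]
      simp only [Matrix.mul_assoc]
    rw [hrow, hu, sub_eq_add_neg, Matrix.replicateCol_smul, Matrix.smul_mul, neg_smul, hA]
  rw [hT, Matrix.isUnit_iff_isUnit_det, Matrix.det_add_replicateCol_mul_replicateRow hAdet]
  have hdet1 : (1 + Matrix.replicateRow Unit r * A⁻¹ * Matrix.replicateCol Unit u).det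
      = 1 + r ⬝ᵥ (A⁻¹ *ᵥ u) := by
    rw [← Matrix.replicateRow_vecMul, Matrix.det_unique, Matrix.add_apply,
      Matrix.one_apply_eq, Matrix.replicateRow_mul_replicateCol_apply, Matrix.dotProduct_mulVec]
  have hru : r ⬝ᵥ (A⁻¹ *ᵥ u) = -(c * (x ⬝ᵥ yv)) := by
    rw [hu, Matrix.mulVec_smul, dotProduct_smul, hrd, neg_smul, smul_eq_mul]
  rw [hdet1, hru]
  -- the scalar bound
  have hXpos : 0 < ‖mulVecE Mᵀ v‖ := norm_pos_iff.2 hv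
  set Y : EuclideanSpace ℝ (Fin d) := (WithLp.equiv 2 (Fin d → ℝ)).symm yv with hY
  have hinX : ⟪mulVecE Mᵀ v, Y⟫_ℝ = x ⬝ᵥ yv := by
    simp [mulVecE, hY, PiLp.inner_apply, RCLike.inner_apply, dotProduct, hx, hv', mul_comm]
  have hYnorm : ‖Y‖ = Real.sqrt t := by
    have h3 : ⟪Y, Y⟫_ℝ = t := by
      rw [← hyy]; simp [hY, PiLp.inner_apply, RCLike.inner_apply, dotProduct]
      rw [EuclideanSpace.real_norm_sq_eq]; simp [sq]
    rw [norm_eq_sqrt_real_inner, h3]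
  have hCS : |x ⬝ᵥ yv| ≤ ‖mulVecE Mᵀ v‖ * Real.sqrt t := by
    rw [← hinX, ← hYnorm]
    exact abs_real_inner_le_norm _ _
  have hbound : |c * (x ⬝ᵥ yv)| ≤ 1 / 2 := by
    rw [abs_mul, hc, abs_div, abs_of_pos hμpos, abs_of_pos hXpos]
    calc μ / ‖mulVecE Mᵀ v‖ * |x ⬝ᵥ yv|
        ≤ μ / ‖mulVecE Mᵀ v‖ * (‖mulVecE Mᵀ v‖ * Real.sqrt t) := by
          gcongr
      _ = μ * Real.sqrt t := by field_simp
      _ = 1 / 2 := hμt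
  have habs := abs_le.1 hbound
  have hne : 1 + -(c * (x ⬝ᵥ yv)) ≠ 0 := by
    intro h
    linarith [habs.1, habs.2]
  exact hAdet.mul (isUnit_iff_ne_zero.2 hne)
end

section
/- Let M be an n×d real matrix and G an n×s real matrix with GᵀMMᵀG positive definite. For v ∈ ℝⁿ set λ := −(GᵀMMᵀG)⁻¹GᵀMMᵀv and Z := I_d − MᵀG(GᵀMMᵀG)⁻¹GᵀM. Let ν ∈ ℝ^s satisfy 1 + ⟨ν, λ⟩ ≠ 0, so that (G − v νᵀ)ᵀMMᵀG is invertible, and define the oblique projection R' := MᵀG·((G − v νᵀ)ᵀMMᵀG)⁻¹·(G − v νᵀ)ᵀM and R := I_d − R'. Then vᵀ M R Mᵀ v = ‖Z Mᵀ v‖² / (1 + ⟨ν, λ⟩). -/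
open Matrix InnerProductSpace

lemma vecMulVec_mulVec' {a b : ℕ} (w : Fin a → ℝ) (u x : Fin b → ℝ) :
    vecMulVec w u *ᵥ x = (u ⬝ᵥ x) • w := by
  ext i
  simp [vecMulVec_apply, mulVec, dotProduct, Finset.mul_sum, mul_comm, mul_left_comm]

lemma vecMulVec_transpose' {a b : ℕ} (w : Fin a → ℝ) (u : Fin b → ℝ) :
    (vecMulVec w u)ᵀ = vecMulVec u w := by
  ext i j; simp [vecMulVec_apply, mul_comm]

lemma vecMulVec_mul' {a b c : ℕ} (w : Fin a → ℝ) (u : Fin b → ℝ) (C : Matrix (Fin b) (Fin c) ℝ) :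
    vecMulVec w u * C = vecMulVec w (u ᵥ* C) := by
  ext i j
  simp [vecMulVec_apply, mul_apply, vecMul, dotProduct, Finset.mul_sum, mul_assoc]

lemma vecMul_vecMulVec' {a b : ℕ} (x a' : Fin a → ℝ) (b' : Fin b → ℝ) :
    x ᵥ* vecMulVec a' b' = (x ⬝ᵥ a') • b' := by
  ext j
  simp [vecMul, vecMulVec_apply, dotProduct, Finset.sum_mul, Finset.mul_sum, mul_comm,
    mul_left_comm]

lemma vecMulVec_smul' {a b : ℕ} (w : Fin a → ℝ) (r : ℝ) (u : Fin b → ℝ) :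
    vecMulVec w (r • u) = r • vecMulVec w u := by
  ext i j
  simp [vecMulVec_apply, mul_comm, mul_left_comm]

theorem stmt13 {n d s : ℕ} (hn : 0 < n) (hd : 0 < d) (hs : 0 < s)
    (M : Matrix (Fin n) (Fin d) ℝ) (G : Matrix (Fin n) (Fin s) ℝ)
    (hpd : (Gᵀ * M * Mᵀ * G).PosDef)
    (v : EuclideanSpace ℝ (Fin n)) (ν : EuclideanSpace ℝ (Fin s))
    (hν : 1 + ⟪ν, lamVec M G v⟫_ℝ ≠ 0)
    (R' : Matrix (Fin d) (Fin d) ℝ)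
    (hR' : R' = Mᵀ * G *
        ((G - vecMulVec ((WithLp.equiv 2 (Fin n → ℝ)) v) ((WithLp.equiv 2 (Fin s → ℝ)) ν))ᵀ
          * M * Mᵀ * G)⁻¹ *
        (G - vecMulVec ((WithLp.equiv 2 (Fin n → ℝ)) v) ((WithLp.equiv 2 (Fin s → ℝ)) ν))ᵀ * M)
    (R : Matrix (Fin d) (Fin d) ℝ) (hR : R = 1 - R') :
    ⟪v, mulVecE M (mulVecE R (mulVecE Mᵀ v))⟫_ℝ
      = ‖mulVecE (Zmat M G) (mulVecE Mᵀ v)‖ ^ 2 / (1 + ⟪ν, lamVec M G v⟫_ℝ) := by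
  classical
  have hAd : IsUnit (Gᵀ * M * Mᵀ * G).det := hpd.det_pos.ne'.isUnit
  set v' : Fin n → ℝ := (WithLp.equiv 2 (Fin n → ℝ)) v with hv'
  set ν' : Fin s → ℝ := (WithLp.equiv 2 (Fin s → ℝ)) ν with hν'
  set A : Matrix (Fin s) (Fin s) ℝ := Gᵀ * M * Mᵀ * G with hAdef
  have hA1 : A * A⁻¹ = 1 := Matrix.mul_nonsing_inv _ hAd
  have hA2 : A⁻¹ * A = 1 := Matrix.nonsing_inv_mul _ hAd
  have hAt : Aᵀ = A := by
    rw [hAdef]; simp [Matrix.transpose_mul, Matrix.mul_assoc]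
  have hAit : A⁻¹ᵀ = A⁻¹ := by rw [Matrix.transpose_nonsing_inv, hAt]
  set u : Fin s → ℝ := (Gᵀ * M * Mᵀ) *ᵥ v' with hu
  set l : Fin s → ℝ := -(A⁻¹ *ᵥ u) with hl
  set c : ℝ := ν' ⬝ᵥ l with hc
  set t : ℝ := v' ⬝ᵥ ((M * Mᵀ) *ᵥ v') with ht
  set q : ℝ := u ⬝ᵥ (A⁻¹ *ᵥ u) with hq
  -- the inner product in the statement is `c`
  have hlamfun : (WithLp.equiv 2 (Fin s → ℝ)) (lamVec M G v) = l := by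
    have h0 : (WithLp.equiv 2 (Fin s → ℝ)) (lamVec M G v)
        = -((A⁻¹ * Gᵀ * M * Mᵀ) *ᵥ v') := rfl
    rw [h0, hl, hu]
    simp [Matrix.mulVec_mulVec, Matrix.mul_assoc]
  have hlam : ⟪ν, lamVec M G v⟫_ℝ = c := by
    have h1 : ⟪ν, lamVec M G v⟫_ℝ
        = ν' ⬝ᵥ (WithLp.equiv 2 (Fin s → ℝ)) (lamVec M G v) := by
      simp [PiLp.inner_apply, RCLike.inner_apply, dotProduct, hν']
      exact Finset.sum_congr rfl fun _ _ => mul_comm _ _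
    rw [h1, hlamfun, hc]
  rw [hlam] at hν ⊢
  have hkc : (1 + c)⁻¹ * (1 + c) = 1 := inv_mul_cancel₀ hν
  set k : ℝ := (1 + c)⁻¹ with hk
  set N : Matrix (Fin s) (Fin s) ℝ := vecMulVec ν' l with hN
  -- basic vecMul facts
  have hvu : v' ᵥ* (M * Mᵀ * G) = u := by
    rw [← Matrix.mulVec_transpose, hu]
    congr 1
    simp [Matrix.transpose_mul, Matrix.mul_assoc]
  have hAl : A *ᵥ l = -u := by
    rw [hl, Matrix.mulVec_neg, Matrix.mulVec_mulVec, hA1, Matrix.one_mulVec]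
  -- B = (1 + N) * A
  have hBmat : (G - vecMulVec v' ν')ᵀ * M * Mᵀ * G = (1 + N) * A := by
    have h1 : (vecMulVec v' ν')ᵀ * M * Mᵀ * G = vecMulVec ν' u := by
      rw [vecMulVec_transpose', Matrix.mul_assoc, Matrix.mul_assoc, ← Matrix.mul_assoc M,
        vecMulVec_mul', hvu]
    have h2 : N * A = -(vecMulVec ν' u) := by
      rw [hN, vecMulVec_mul']
      have : l ᵥ* A = A *ᵥ l := by rw [← Matrix.mulVec_transpose, hAt]
      rw [this, hAl]
      ext i j; simp [vecMulVec_apply]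
    rw [Matrix.transpose_sub, Matrix.sub_mul, Matrix.sub_mul, Matrix.sub_mul, h1,
      Matrix.add_mul, Matrix.one_mul, h2, ← hAdef, sub_eq_add_neg]
  have hNN : N * N = c • N := by
    rw [hN, vecMulVec_mul', vecMul_vecMulVec', _root_.vecMulVec_smul']
    congr 1
    rw [hc, dotProduct_comm]
  -- explicit inverse
  have hBinv : ((G - vecMulVec v' ν')ᵀ * M * Mᵀ * G)⁻¹ = A⁻¹ * (1 - k • N) := by
    apply Matrix.inv_eq_right_inv
    rw [hBmat, Matrix.mul_assoc, ← Matrix.mul_assoc A, hA1, Matrix.one_mul]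
    have hcoeff : (1 : ℝ) - k - k * c = 0 := by
      have := hkc; ring_nf at this ⊢; linarith
    calc (1 + N) * (1 - k • N)
        = 1 - k • N + (N - k • (N * N)) := by
          rw [Matrix.add_mul, Matrix.one_mul, Matrix.mul_sub, Matrix.mul_one, Matrix.mul_smul]
      _ = 1 - k • N + (N - (k * c) • N) := by rw [hNN, smul_smul]
      _ = 1 + ((1 - k - k * c) • N) := by module
      _ = 1 := by rw [hcoeff, zero_smul, add_zero]
  -- scalar facts
  have hlu : l ⬝ᵥ u = -q := by
    rw [hl, neg_dotProduct, hq, dotProduct_comm]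
  have hlν : l ⬝ᵥ ν' = c := by rw [hc, dotProduct_comm]
  have huAν : u ⬝ᵥ (A⁻¹ *ᵥ ν') = -c := by
    rw [Matrix.dotProduct_mulVec]
    have h1 : u ᵥ* A⁻¹ = A⁻¹ *ᵥ u := by rw [← Matrix.mulVec_transpose, hAit]
    rw [h1]
    have h2 : A⁻¹ *ᵥ u = -l := by rw [hl, neg_neg]
    rw [h2, neg_dotProduct, hlν]
  -- core vector
  have hcore : ((G - vecMulVec v' ν')ᵀ * M) *ᵥ (Mᵀ *ᵥ v') = u - t • ν' := by
    rw [Matrix.transpose_sub, vecMulVec_transpose', Matrix.sub_mul, Matrix.sub_mulVec]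
    congr 1
    · rw [Matrix.mulVec_mulVec, hu]
    · rw [vecMulVec_mul', vecMulVec_mulVec']
      congr 1
      rw [← Matrix.dotProduct_mulVec, Matrix.mulVec_mulVec, ht]
  -- inverse action on vectors
  have hBv : ∀ x : Fin s → ℝ, (A⁻¹ * (1 - k • N)) *ᵥ x
      = A⁻¹ *ᵥ x - (k * (l ⬝ᵥ x)) • (A⁻¹ *ᵥ ν') := by
    intro x
    rw [← Matrix.mulVec_mulVec, Matrix.sub_mulVec, Matrix.one_mulVec,
      Matrix.smul_mulVec, hN, vecMulVec_mulVec', Matrix.mulVec_sub, smul_smul,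
      Matrix.mulVec_smul]
  -- sandwich fact
  have hMtG : ∀ y : Fin s → ℝ, v' ⬝ᵥ (M *ᵥ ((Mᵀ * G) *ᵥ y)) = u ⬝ᵥ y := by
    intro y
    rw [Matrix.mulVec_mulVec, Matrix.dotProduct_mulVec]
    congr 1
    rw [← Matrix.mul_assoc, hvu]
  -- LHS value
  have keyL : v' ⬝ᵥ (M *ᵥ (R *ᵥ (Mᵀ *ᵥ v'))) = t - k * (q + t * c) := by
    rw [hR, hR', hBinv]
    rw [Matrix.sub_mulVec, Matrix.one_mulVec, Matrix.mulVec_sub, dotProduct_sub]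
    have hsplit : (Mᵀ * G * (A⁻¹ * (1 - k • N)) * (G - vecMulVec v' ν')ᵀ * M) *ᵥ (Mᵀ *ᵥ v')
        = (Mᵀ * G) *ᵥ ((A⁻¹ * (1 - k • N)) *ᵥ (((G - vecMulVec v' ν')ᵀ * M) *ᵥ (Mᵀ *ᵥ v'))) := by
      simp [Matrix.mulVec_mulVec, Matrix.mul_assoc]
    rw [hsplit, hcore, hBv, hMtG]
    simp only [Matrix.mulVec_mulVec, Matrix.mulVec_sub, Matrix.mulVec_smul, dotProduct_sub,
      dotProduct_smul, smul_eq_mul, hlu, hlν, huAν, ← hq, ← ht]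
    linear_combination (q + t * c) * hkc
  -- RHS value
  set w : Fin d → ℝ := Mᵀ *ᵥ v' with hw
  have hwdot : ∀ x : Fin d → ℝ, w ⬝ᵥ x = v' ⬝ᵥ (M *ᵥ x) := by
    intro x
    rw [hw, Matrix.mulVec_transpose, ← Matrix.dotProduct_mulVec]
  have hwy : ∀ y : Fin s → ℝ, w ⬝ᵥ ((Mᵀ * G) *ᵥ y) = u ⬝ᵥ y := by
    intro y; rw [hwdot]; exact hMtG y
  have hww : w ⬝ᵥ w = t := by
    rw [hwdot, hw, Matrix.mulVec_mulVec, ht]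
  have keyR : (Zmat M G *ᵥ w) ⬝ᵥ (Zmat M G *ᵥ w) = t - q := by
    have hz : Zmat M G *ᵥ w = w - (Mᵀ * G) *ᵥ (A⁻¹ *ᵥ u) := by
      simp only [Zmat, ← hAdef, Matrix.sub_mulVec, Matrix.one_mulVec]
      congr 1
      rw [hw]
      simp [Matrix.mulVec_mulVec, Matrix.mul_assoc, hu]
    rw [hz]
    rw [dotProduct_sub, sub_dotProduct, sub_dotProduct]
    have h1 : w ⬝ᵥ ((Mᵀ * G) *ᵥ (A⁻¹ *ᵥ u)) = q := by rw [hwy, hq]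
    have h2 : ((Mᵀ * G) *ᵥ (A⁻¹ *ᵥ u)) ⬝ᵥ w = q := by rw [dotProduct_comm, h1]
    have h3 : ((Mᵀ * G) *ᵥ (A⁻¹ *ᵥ u)) ⬝ᵥ ((Mᵀ * G) *ᵥ (A⁻¹ *ᵥ u)) = q := by
      rw [Matrix.dotProduct_mulVec]
      have e3 : (Mᵀ * G)ᵀ * (Mᵀ * G) = A := by
        rw [Matrix.transpose_mul, Matrix.transpose_transpose, ← Matrix.mul_assoc, ← hAdef]
      have e1 : ((Mᵀ * G) *ᵥ (A⁻¹ *ᵥ u)) ᵥ* (Mᵀ * G) = u := by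
        rw [← Matrix.mulVec_transpose, Matrix.mulVec_mulVec, Matrix.mulVec_mulVec,
          e3, hA1, Matrix.one_mulVec]
      rw [e1, ← hq]
    rw [hww, h1, h2, h3]; ring
  -- assemble
  have hgoalL : ⟪v, mulVecE M (mulVecE R (mulVecE Mᵀ v))⟫_ℝ
      = v' ⬝ᵥ (M *ᵥ (R *ᵥ (Mᵀ *ᵥ v'))) := by
    simp [mulVecE, PiLp.inner_apply, RCLike.inner_apply, dotProduct, hv']
    exact Finset.sum_congr rfl fun _ _ => mul_comm _ _
  have hgoalR : ‖mulVecE (Zmat M G) (mulVecE Mᵀ v)‖ ^ 2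
      = (Zmat M G *ᵥ w) ⬝ᵥ (Zmat M G *ᵥ w) := by
    rw [← real_inner_self_eq_norm_sq]
    simp [mulVecE, PiLp.inner_apply, RCLike.inner_apply, dotProduct, hv', hw]
    rw [EuclideanSpace.norm_sq_eq]; simp [Real.norm_eq_abs, sq_abs, sq]
  rw [hgoalL, hgoalR, keyL, keyR]
  rw [eq_div_iff hν]
  linear_combination (-(q + t * c)) * hkc
end

section
/- Let M be an n×d real matrix and G an n×s real matrix with GᵀMMᵀG positive definite. Let v ∈ ℝⁿ with Mᵀv ≠ 0 and σ ∈ ℝ^s nonzero; set μ := 1/(2√(σᵀ(GᵀMMᵀG)⁻¹σ)), λ := −(GᵀMMᵀG)⁻¹GᵀMMᵀv, Z := I_d − MᵀG(GᵀMMᵀG)⁻¹GᵀM, R' := MᵀG·((G − μ·(v σᵀ)/‖Mᵀv‖)ᵀMMᵀG)⁻¹·(G − μ·(v σᵀ)/‖Mᵀv‖)ᵀM, and R := I_d − R'. Then (2/3)·‖Z Mᵀv‖² ≤ vᵀ M R Mᵀ v ≤ 2·‖Z Mᵀv‖². -/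
open Matrix InnerProductSpace

/-
Put `w = Mᵀv`, `B = MᵀG`, `A = BᵀB`, `b = Bᵀw`, `c = μ / ‖w‖` and `K = Bᵀ - c σ wᵀ`. Then
`R' = B (K B)⁻¹ K` and `K B = A - c σ bᵀ` is a rank-one perturbation of `A`; solving the
perturbed system (Sherman–Morrison) gives `wᵀ R w = ‖Z w‖² / (1 - c bᵀA⁻¹σ)`, where
`‖Z w‖² = ‖w‖² - bᵀA⁻¹b` because `Z` is the orthogonal projection onto `(range B)ᗮ`.
Cauchy–Schwarz for the form `A⁻¹` and `bᵀA⁻¹b ≤ ‖w‖²` give `|c bᵀA⁻¹σ| ≤ 1/2`, so the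
denominator lies in `[1/2, 3/2]`.
-/

namespace Matrix

variable {d s : Type*} [Fintype d] [Fintype s] [DecidableEq d] [DecidableEq s]

theorem PosSemidef.sq_dotProduct_mulVec_le {A : Matrix s s ℝ} (hA : A.PosSemidef) (x y : s → ℝ) :
    (x ⬝ᵥ A *ᵥ y) ^ 2 ≤ (x ⬝ᵥ A *ᵥ x) * (y ⬝ᵥ A *ᵥ y) := by
  have hsymm : (toLinearMap₂' ℝ A).IsSymm := by
    refine ⟨fun x y => ?_⟩
    have hAt : Aᵀ = A := by simpa [conjTranspose_eq_transpose_of_trivial] using hA.isHermitian.eq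
    simp only [toLinearMap₂'_apply', RingHom.id_apply]
    rw [dotProduct_mulVec, ← mulVec_transpose, dotProduct_comm, hAt]
  simpa [toLinearMap₂'_apply'] using
    LinearMap.BilinForm.apply_sq_le_of_symm (toLinearMap₂' ℝ A) (fun z => by
      simpa [toLinearMap₂'_apply'] using hA.dotProduct_mulVec_nonneg z) hsymm x y

theorem det_sub_smul_vecMulVec {A : Matrix s s ℝ} (hA : IsUnit A.det) (c : ℝ) (u v : s → ℝ) :
    (A - c • vecMulVec u v).det = A.det * (1 - c * (v ⬝ᵥ A⁻¹ *ᵥ u)) := by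
  rw [sub_eq_add_neg, ← neg_smul, ← smul_vecMulVec, vecMulVec_eq Unit,
    det_add_replicateCol_mul_replicateRow hA, det_unique (n := Unit), Matrix.mul_assoc,
    ← replicateCol_mulVec, add_apply, replicateRow_mul_replicateCol_apply]
  simp [sub_eq_add_neg, mulVec_neg, mulVec_smul]

theorem mul_dotProduct_inv_sub_smul_vecMulVec_mulVec {A : Matrix s s ℝ} (hA : IsUnit A.det)
    {c : ℝ} {σ b : s → ℝ} (h : 1 - c * (b ⬝ᵥ A⁻¹ *ᵥ σ) ≠ 0) (u : s → ℝ) :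
    (1 - c * (b ⬝ᵥ A⁻¹ *ᵥ σ)) * (b ⬝ᵥ (A - c • vecMulVec σ b)⁻¹ *ᵥ u) = b ⬝ᵥ A⁻¹ *ᵥ u := by
  have hH : IsUnit (A - c • vecMulVec σ b).det := by
    rw [det_sub_smul_vecMulVec hA]
    exact hA.mul h.isUnit
  set y := (A - c • vecMulVec σ b)⁻¹ *ᵥ u
  have hy : A *ᵥ y - (c * (b ⬝ᵥ y)) • σ = u := by
    have hHy : (A - c • vecMulVec σ b) *ᵥ y = u := by
      rw [mulVec_mulVec, mul_nonsing_inv _ hH, one_mulVec]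
    rwa [sub_mulVec, smul_mulVec, vecMulVec_mulVec, op_smul_eq_smul, smul_smul] at hHy
  have hAy : A⁻¹ *ᵥ u = y - (c * (b ⬝ᵥ y)) • (A⁻¹ *ᵥ σ) := by
    rw [← hy, mulVec_sub, mulVec_mulVec, nonsing_inv_mul _ hA, one_mulVec, mulVec_smul]
  rw [hAy, dotProduct_sub, dotProduct_smul, smul_eq_mul]
  ring

theorem dotProduct_self_one_sub_proj_mulVec (B : Matrix d s ℝ) (hB : IsUnit (Bᵀ * B).det)
    (w : d → ℝ) :
    ((1 - B * (Bᵀ * B)⁻¹ * Bᵀ) *ᵥ w) ⬝ᵥ ((1 - B * (Bᵀ * B)⁻¹ * Bᵀ) *ᵥ w) =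
      w ⬝ᵥ w - (Bᵀ *ᵥ w) ⬝ᵥ (Bᵀ * B)⁻¹ *ᵥ (Bᵀ *ᵥ w) := by
  set y := (Bᵀ * B)⁻¹ *ᵥ (Bᵀ *ᵥ w)
  have hZw : (1 - B * (Bᵀ * B)⁻¹ * Bᵀ) *ᵥ w = w - B *ᵥ y := by
    rw [sub_mulVec, one_mulVec, ← mulVec_mulVec, ← mulVec_mulVec]
  have hBy : Bᵀ *ᵥ (B *ᵥ y) = Bᵀ *ᵥ w := by
    rw [mulVec_mulVec, mulVec_mulVec, mul_nonsing_inv _ hB, one_mulVec]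
  have hdot (x : d → ℝ) : x ⬝ᵥ B *ᵥ y = (Bᵀ *ᵥ x) ⬝ᵥ y := by
    rw [dotProduct_mulVec, mulVec_transpose]
  rw [hZw, sub_dotProduct, dotProduct_sub, dotProduct_sub, dotProduct_comm (B *ᵥ y) w, hdot,
    hdot, hBy]
  ring

theorem dotProduct_one_sub_oblique_mulVec (B : Matrix d s ℝ) (hB : IsUnit (Bᵀ * B).det)
    {c : ℝ} {σ : s → ℝ} {w : d → ℝ} (h : 1 - c * ((Bᵀ *ᵥ w) ⬝ᵥ (Bᵀ * B)⁻¹ *ᵥ σ) ≠ 0) :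
    w ⬝ᵥ (1 - B * ((Bᵀ - c • vecMulVec σ w) * B)⁻¹ * (Bᵀ - c • vecMulVec σ w)) *ᵥ w =
      (w ⬝ᵥ w - (Bᵀ *ᵥ w) ⬝ᵥ (Bᵀ * B)⁻¹ *ᵥ (Bᵀ *ᵥ w)) /
        (1 - c * ((Bᵀ *ᵥ w) ⬝ᵥ (Bᵀ * B)⁻¹ *ᵥ σ)) := by
  set K := Bᵀ - c • vecMulVec σ w
  have hKB : K * B = Bᵀ * B - c • vecMulVec σ (Bᵀ *ᵥ w) := by
    rw [Matrix.sub_mul, smul_mul, vecMulVec_mul, ← mulVec_transpose]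
  have hKw : K *ᵥ w = Bᵀ *ᵥ w - (c * (w ⬝ᵥ w)) • σ := by
    rw [sub_mulVec, smul_mulVec, vecMulVec_mulVec, op_smul_eq_smul, smul_smul]
  have hR : w ⬝ᵥ (1 - B * (K * B)⁻¹ * K) *ᵥ w =
      w ⬝ᵥ w - (Bᵀ *ᵥ w) ⬝ᵥ (K * B)⁻¹ *ᵥ (K *ᵥ w) := by
    rw [sub_mulVec, one_mulVec, dotProduct_sub, ← mulVec_mulVec, ← mulVec_mulVec,
      dotProduct_mulVec w B, ← mulVec_transpose]
  have hb : (Bᵀ *ᵥ w) ⬝ᵥ (Bᵀ * B)⁻¹ *ᵥ (K *ᵥ w) = (Bᵀ *ᵥ w) ⬝ᵥ (Bᵀ * B)⁻¹ *ᵥ (Bᵀ *ᵥ w) -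
      c * (w ⬝ᵥ w) * ((Bᵀ *ᵥ w) ⬝ᵥ (Bᵀ * B)⁻¹ *ᵥ σ) := by
    rw [hKw, mulVec_sub, mulVec_smul, dotProduct_sub, dotProduct_smul, smul_eq_mul]
  have key := mul_dotProduct_inv_sub_smul_vecMulVec_mulVec hB h (K *ᵥ w)
  rw [← hKB, hb] at key
  rw [hR, eq_div_iff h]
  linear_combination -key

theorem abs_mul_dotProduct_le_half {B : Matrix d s ℝ} (hB : (Bᵀ * B).PosDef) {c : ℝ}
    {σ : s → ℝ} {w : d → ℝ} (hc : c ^ 2 * (σ ⬝ᵥ (Bᵀ * B)⁻¹ *ᵥ σ) * (w ⬝ᵥ w) ≤ 1 / 4) :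
    |c * ((Bᵀ *ᵥ w) ⬝ᵥ (Bᵀ * B)⁻¹ *ᵥ σ)| ≤ 1 / 2 := by
  have hinv : (Bᵀ * B)⁻¹.PosSemidef := hB.posSemidef.inv
  have hCS := hinv.sq_dotProduct_mulVec_le (Bᵀ *ᵥ w) σ
  have hq : 0 ≤ σ ⬝ᵥ (Bᵀ * B)⁻¹ *ᵥ σ := by simpa using hinv.dotProduct_mulVec_nonneg σ
  have hβ : (Bᵀ *ᵥ w) ⬝ᵥ (Bᵀ * B)⁻¹ *ᵥ (Bᵀ *ᵥ w) ≤ w ⬝ᵥ w := by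
    have hproj := dotProduct_self_one_sub_proj_mulVec B hB.det_pos.ne'.isUnit w
    have hZw := dotProduct_star_self_nonneg ((1 - B * (Bᵀ * B)⁻¹ * Bᵀ) *ᵥ w)
    simp only [star_trivial] at hZw
    linarith
  apply abs_le_of_sq_le_sq _ (by norm_num)
  calc (c * ((Bᵀ *ᵥ w) ⬝ᵥ (Bᵀ * B)⁻¹ *ᵥ σ)) ^ 2
      ≤ c ^ 2 * ((Bᵀ *ᵥ w) ⬝ᵥ (Bᵀ * B)⁻¹ *ᵥ (Bᵀ *ᵥ w) * (σ ⬝ᵥ (Bᵀ * B)⁻¹ *ᵥ σ)) := by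
        rw [mul_pow]; gcongr
    _ ≤ c ^ 2 * (w ⬝ᵥ w * (σ ⬝ᵥ (Bᵀ * B)⁻¹ *ᵥ σ)) := by gcongr
    _ ≤ (1 / 2) ^ 2 := by linarith

theorem dotProduct_one_sub_oblique_mulVec_bounds {B : Matrix d s ℝ} (hB : (Bᵀ * B).PosDef)
    {c : ℝ} {σ : s → ℝ} {w : d → ℝ}
    (hc : c ^ 2 * (σ ⬝ᵥ (Bᵀ * B)⁻¹ *ᵥ σ) * (w ⬝ᵥ w) ≤ 1 / 4) :
    2 / 3 * (((1 - B * (Bᵀ * B)⁻¹ * Bᵀ) *ᵥ w) ⬝ᵥ ((1 - B * (Bᵀ * B)⁻¹ * Bᵀ) *ᵥ w)) ≤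
        w ⬝ᵥ (1 - B * ((Bᵀ - c • vecMulVec σ w) * B)⁻¹ * (Bᵀ - c • vecMulVec σ w)) *ᵥ w ∧
      w ⬝ᵥ (1 - B * ((Bᵀ - c • vecMulVec σ w) * B)⁻¹ * (Bᵀ - c • vecMulVec σ w)) *ᵥ w ≤
        2 * (((1 - B * (Bᵀ * B)⁻¹ * Bᵀ) *ᵥ w) ⬝ᵥ ((1 - B * (Bᵀ * B)⁻¹ * Bᵀ) *ᵥ w)) := by
  have hBB : IsUnit (Bᵀ * B).det := hB.det_pos.ne'.isUnit
  obtain ⟨hlo, hhi⟩ := abs_le.mp (abs_mul_dotProduct_le_half hB hc)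
  have hden : 0 < 1 - c * ((Bᵀ *ᵥ w) ⬝ᵥ (Bᵀ * B)⁻¹ *ᵥ σ) := by linarith
  have hZw := dotProduct_star_self_nonneg ((1 - B * (Bᵀ * B)⁻¹ * Bᵀ) *ᵥ w)
  simp only [star_trivial] at hZw
  rw [dotProduct_one_sub_oblique_mulVec B hBB hden.ne',
    ← dotProduct_self_one_sub_proj_mulVec B hBB, le_div_iff₀ hden, div_le_iff₀ hden]
  constructor <;> nlinarith

end Matrix

theorem Matrix.transpose_sub_smul_vecMulVec_mul {n d s : Type*} [Fintype n] (G : Matrix n s ℝ)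
    (M : Matrix n d ℝ) (c : ℝ) (v : n → ℝ) (σ : s → ℝ) :
    (G - c • vecMulVec v σ)ᵀ * M = (Mᵀ * G)ᵀ - c • vecMulVec σ (Mᵀ *ᵥ v) := by
  rw [transpose_sub, transpose_smul, transpose_vecMulVec, Matrix.sub_mul, smul_mul, vecMulVec_mul,
    ← mulVec_transpose, transpose_mul, transpose_transpose]

theorem Zmat_eq_one_sub_proj {n d s : Type*} [Fintype n] [Fintype d] [DecidableEq d] [Fintype s]
    [DecidableEq s] (M : Matrix n d ℝ) (G : Matrix n s ℝ) :
    Zmat M G = 1 - (Mᵀ * G) * ((Mᵀ * G)ᵀ * (Mᵀ * G))⁻¹ * (Mᵀ * G)ᵀ := by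
  simp only [Zmat, transpose_mul, transpose_transpose, Matrix.mul_assoc]

theorem equiv_mulVecE {m k : Type*} [Fintype k] (A : Matrix m k ℝ) (x : EuclideanSpace ℝ k) :
    WithLp.equiv 2 (m → ℝ) (mulVecE A x) = A *ᵥ WithLp.equiv 2 (k → ℝ) x := rfl

theorem EuclideanSpace.real_inner_eq_dotProduct {m : Type*} [Fintype m]
    (x y : EuclideanSpace ℝ m) :
    ⟪x, y⟫_ℝ = WithLp.equiv 2 (m → ℝ) x ⬝ᵥ WithLp.equiv 2 (m → ℝ) y := by
  simp [EuclideanSpace.inner_eq_star_dotProduct, dotProduct_comm]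

theorem EuclideanSpace.norm_sq_eq_dotProduct {m : Type*} [Fintype m] (x : EuclideanSpace ℝ m) :
    ‖x‖ ^ 2 = WithLp.equiv 2 (m → ℝ) x ⬝ᵥ WithLp.equiv 2 (m → ℝ) x := by
  rw [← real_inner_self_eq_norm_sq, EuclideanSpace.real_inner_eq_dotProduct]

theorem div_two_sqrt_div_sq_mul_le (q x : ℝ) : (1 / (2 * √q) / x) ^ 2 * q * x ^ 2 ≤ 1 / 4 := by
  rcases le_or_gt q 0 with hq | hq
  · simp [Real.sqrt_eq_zero'.mpr hq]
  rcases eq_or_ne x 0 with rfl | hx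
  · simp
  rw [div_pow, div_pow, mul_pow, Real.sq_sqrt hq.le]
  field_simp
  norm_num

theorem stmt14_general {n d s : ℕ}
    (M : Matrix (Fin n) (Fin d) ℝ) (G : Matrix (Fin n) (Fin s) ℝ)
    (hpd : (Gᵀ * M * Mᵀ * G).PosDef)
    (v : EuclideanSpace ℝ (Fin n))
    (σ : EuclideanSpace ℝ (Fin s))
    (μ : ℝ) (hμ : μ = 1 / (2 * Real.sqrt ⟪σ, mulVecE ((Gᵀ * M * Mᵀ * G)⁻¹) σ⟫_ℝ))
    (R' : Matrix (Fin d) (Fin d) ℝ)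
    (hR' : R' = Mᵀ * G *
        ((G - (μ / ‖mulVecE Mᵀ v‖) •
            vecMulVec ((WithLp.equiv 2 (Fin n → ℝ)) v) ((WithLp.equiv 2 (Fin s → ℝ)) σ))ᵀ
          * M * Mᵀ * G)⁻¹ *
        (G - (μ / ‖mulVecE Mᵀ v‖) •
            vecMulVec ((WithLp.equiv 2 (Fin n → ℝ)) v) ((WithLp.equiv 2 (Fin s → ℝ)) σ))ᵀ * M)
    (R : Matrix (Fin d) (Fin d) ℝ) (hR : R = 1 - R') :
    (2 / 3) * ‖mulVecE (Zmat M G) (mulVecE Mᵀ v)‖ ^ 2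
        ≤ ⟪v, mulVecE M (mulVecE R (mulVecE Mᵀ v))⟫_ℝ ∧
    ⟪v, mulVecE M (mulVecE R (mulVecE Mᵀ v))⟫_ℝ
        ≤ 2 * ‖mulVecE (Zmat M G) (mulVecE Mᵀ v)‖ ^ 2 := by
  have hBB : (Mᵀ * G)ᵀ * (Mᵀ * G) = Gᵀ * M * Mᵀ * G := by
    simp only [transpose_mul, transpose_transpose, Matrix.mul_assoc]
  have hc : (μ / ‖mulVecE Mᵀ v‖) ^ 2 *
      (WithLp.equiv 2 _ σ ⬝ᵥ ((Mᵀ * G)ᵀ * (Mᵀ * G))⁻¹ *ᵥ WithLp.equiv 2 _ σ) *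
      ((Mᵀ *ᵥ WithLp.equiv 2 _ v) ⬝ᵥ (Mᵀ *ᵥ WithLp.equiv 2 _ v)) ≤ 1 / 4 := by
    rw [hBB, ← equiv_mulVecE, ← EuclideanSpace.real_inner_eq_dotProduct, ← equiv_mulVecE,
      ← EuclideanSpace.norm_sq_eq_dotProduct, hμ]
    exact div_two_sqrt_div_sq_mul_le _ _
  have hRB : R = 1 - (Mᵀ * G) *
      (((Mᵀ * G)ᵀ - (μ / ‖mulVecE Mᵀ v‖) •
        vecMulVec (WithLp.equiv 2 _ σ) (Mᵀ *ᵥ WithLp.equiv 2 _ v)) * (Mᵀ * G))⁻¹ *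
      ((Mᵀ * G)ᵀ - (μ / ‖mulVecE Mᵀ v‖) •
        vecMulVec (WithLp.equiv 2 _ σ) (Mᵀ *ᵥ WithLp.equiv 2 _ v)) := by
    rw [hR, hR', ← transpose_sub_smul_vecMulVec_mul]
    simp only [Matrix.mul_assoc]
  rw [EuclideanSpace.norm_sq_eq_dotProduct, EuclideanSpace.real_inner_eq_dotProduct]
  simp only [equiv_mulVecE]
  rw [dotProduct_mulVec (WithLp.equiv 2 _ v) M, ← mulVec_transpose, hRB, Zmat_eq_one_sub_proj]
  exact dotProduct_one_sub_oblique_mulVec_bounds (hBB ▸ hpd) hc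

theorem stmt14 {n d s : ℕ} (hn : 0 < n) (hd : 0 < d) (hs : 0 < s)
    (M : Matrix (Fin n) (Fin d) ℝ) (G : Matrix (Fin n) (Fin s) ℝ)
    (hpd : (Gᵀ * M * Mᵀ * G).PosDef)
    (v : EuclideanSpace ℝ (Fin n)) (hv : mulVecE Mᵀ v ≠ 0)
    (σ : EuclideanSpace ℝ (Fin s)) (hσ : σ ≠ 0)
    (μ : ℝ) (hμ : μ = 1 / (2 * Real.sqrt ⟪σ, mulVecE ((Gᵀ * M * Mᵀ * G)⁻¹) σ⟫_ℝ))
    (R' : Matrix (Fin d) (Fin d) ℝ)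
    (hR' : R' = Mᵀ * G *
        ((G - (μ / ‖mulVecE Mᵀ v‖) •
            vecMulVec ((WithLp.equiv 2 (Fin n → ℝ)) v) ((WithLp.equiv 2 (Fin s → ℝ)) σ))ᵀ
          * M * Mᵀ * G)⁻¹ *
        (G - (μ / ‖mulVecE Mᵀ v‖) •
            vecMulVec ((WithLp.equiv 2 (Fin n → ℝ)) v) ((WithLp.equiv 2 (Fin s → ℝ)) σ))ᵀ * M)
    (R : Matrix (Fin d) (Fin d) ℝ) (hR : R = 1 - R') :
    (2 / 3) * ‖mulVecE (Zmat M G) (mulVecE Mᵀ v)‖ ^ 2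
        ≤ ⟪v, mulVecE M (mulVecE R (mulVecE Mᵀ v))⟫_ℝ ∧
    ⟪v, mulVecE M (mulVecE R (mulVecE Mᵀ v))⟫_ℝ
        ≤ 2 * ‖mulVecE (Zmat M G) (mulVecE Mᵀ v)‖ ^ 2 :=
  stmt14_general M G hpd v σ μ hμ R' hR' R hR
end

section
/- Let λ ∈ ℝ^s and ε₂ > 0 satisfy min_i λ_i < −ε₂ and −∑_i λ_i < ε₂/2. Define d̄ ∈ ℝ^s by d̄_i = 1 if λ_i ≤ 0, and d̄_i = (∑_{j : λ_j ≤ 0} (−λ_j)) / (2·∑_{j : λ_j > 0} λ_j) if λ_i > 0. Then: (i) ∑_{j : λ_j > 0} λ_j > ε₂/2 (so d̄ is well defined); (ii) ⟨λ, d̄⟩ = (1/2)·∑_{j : λ_j ≤ 0} λ_j < −ε₂/2; and (iii) ‖d̄‖ ≤ √s. -/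
open Matrix InnerProductSpace

theorem stmt17 {s : ℕ} (hs : 0 < s)
    (lam : EuclideanSpace ℝ (Fin s)) (l : Fin s → ℝ)
    (hl : l = (WithLp.equiv 2 (Fin s → ℝ)) lam)
    (ε₂ : ℝ) (hε₂ : 0 < ε₂)
    (hmin : ∃ i, l i < -ε₂)
    (hsum : -(∑ i, l i) < ε₂ / 2)
    (dbar : EuclideanSpace ℝ (Fin s))
    (hdbar : ∀ i, (WithLp.equiv 2 (Fin s → ℝ)) dbar i =
      if l i ≤ 0 then 1
      else (∑ j ∈ Finset.univ.filter (fun j => l j ≤ 0), -l j) /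
        (2 * ∑ j ∈ Finset.univ.filter (fun j => 0 < l j), l j)) :
    ε₂ / 2 < ∑ j ∈ Finset.univ.filter (fun j => 0 < l j), l j ∧
    (⟪lam, dbar⟫_ℝ = (1 / 2) * ∑ j ∈ Finset.univ.filter (fun j => l j ≤ 0), l j ∧
      ⟪lam, dbar⟫_ℝ < -(ε₂ / 2)) ∧
    ‖dbar‖ ≤ Real.sqrt s := by
  classical
  set T := Finset.univ.filter (fun j => l j ≤ 0) with hT
  set U := Finset.univ.filter (fun j => 0 < l j) with hU
  set N := ∑ j ∈ T, l j with hN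
  set P := ∑ j ∈ U, l j with hP
  obtain ⟨i, hi⟩ := hmin
  have hiT : i ∈ T := by simp [hT]; linarith
  have hNle : N ≤ l i := by
    rw [hN, ← Finset.add_sum_erase _ _ hiT]
    have : ∑ j ∈ T.erase i, l j ≤ 0 := by
      apply Finset.sum_nonpos
      intro j hj
      have := Finset.mem_of_mem_erase hj
      simp [hT] at this; exact this
    linarith
  have hNneg : N < -ε₂ := lt_of_le_of_lt hNle hi
  have hSsplit : N + P = ∑ j, l j := by
    rw [hN, hP, hT, hU]
    rw [← Finset.sum_filter_add_sum_filter_not Finset.univ (fun j => l j ≤ 0)]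
    congr 1
    apply Finset.sum_congr _ (fun _ _ => rfl)
    apply Finset.filter_congr
    intro j _; simp
  have hPgt : ε₂ / 2 < P := by linarith
  have hPpos : (0:ℝ) < P := by linarith
  have hPne : (2 * P) ≠ 0 := by positivity
  -- value of dbar
  have hdb : ∀ j, (WithLp.equiv 2 (Fin s → ℝ)) dbar j =
      if l j ≤ 0 then 1 else (-N) / (2 * P) := by
    intro j
    rw [hdbar j]
    congr 1
    rw [hN, Finset.sum_neg_distrib]
  have hfrac_nonneg : (0:ℝ) ≤ (-N) / (2 * P) := by
    apply div_nonneg <;> linarith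
  have hfrac_le : (-N) / (2 * P) ≤ 1 := by
    rw [div_le_one (by linarith)]
    linarith
  -- inner product
  have hinner : ⟪lam, dbar⟫_ℝ = (1/2) * N := by
    have : ⟪lam, dbar⟫_ℝ = ∑ j, l j * (WithLp.equiv 2 (Fin s → ℝ)) dbar j := by
      rw [PiLp.inner_apply]
      apply Finset.sum_congr rfl
      intro j _
      rw [hl, Real.inner_apply]; rfl
    rw [this]
    rw [← Finset.sum_filter_add_sum_filter_not Finset.univ (fun j => l j ≤ 0)]
    have h1 : ∑ j ∈ Finset.univ.filter (fun j => l j ≤ 0),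
        l j * (WithLp.equiv 2 (Fin s → ℝ)) dbar j = N := by
      rw [hN]
      apply Finset.sum_congr rfl
      intro j hj
      simp only [Finset.mem_filter] at hj
      rw [hdb j, if_pos hj.2, mul_one]
    have h2 : ∑ j ∈ Finset.univ.filter (fun j => ¬ l j ≤ 0),
        l j * (WithLp.equiv 2 (Fin s → ℝ)) dbar j = P * ((-N) / (2 * P)) := by
      have e1 : ∑ j ∈ Finset.univ.filter (fun j => ¬ l j ≤ 0),
          l j * (WithLp.equiv 2 (Fin s → ℝ)) dbar j =
          ∑ j ∈ Finset.univ.filter (fun j => ¬ l j ≤ 0), l j * ((-N) / (2 * P)) := by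
        apply Finset.sum_congr rfl
        intro j hj
        simp only [Finset.mem_filter] at hj
        rw [hdb j, if_neg hj.2]
      have e2 : Finset.univ.filter (fun j => ¬ l j ≤ 0) =
          Finset.univ.filter (fun j => 0 < l j) :=
        Finset.filter_congr (by intro j _; simp)
      rw [e1, ← Finset.sum_mul, e2, ← hP]
      try ring
    rw [h1, h2]
    field_simp
    ring
  refine ⟨hPgt, ⟨hinner, by rw [hinner]; linarith⟩, ?_⟩
  -- norm bound
  rw [EuclideanSpace.norm_eq]
  apply Real.sqrt_le_sqrt
  calc ∑ j, ‖dbar j‖ ^ 2 ≤ ∑ j : Fin s, 1 := by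
        apply Finset.sum_le_sum
        intro j _
        have hj : dbar j = (WithLp.equiv 2 (Fin s → ℝ)) dbar j := rfl
        rw [hj, hdb j]
        by_cases h : l j ≤ 0
        · simp [h]
        · rw [if_neg h]
          rw [Real.norm_eq_abs, abs_of_nonneg hfrac_nonneg]
          nlinarith
    _ = s := by simp
end
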